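/- arXiv:2411.18091 — 6 statements merged into one kernel-verified Lean document; each statement's English description precedes it below -/
import Mathlib

section
/- Let s ∈ ℂ ∖ (−∞,0] and set ω := Re(s^{1/2}) > 0. For every Schwartz function z : ℝ³ → ℂ, setting g := −Δz + s·z, one has ‖z‖_{L²(ℝ³)} ≤ ‖g‖_{L²(ℝ³)} / (ω · |s|^{1/2}). -/
open MeasureTheory Complex SchwartzMap

/-- The Euclidean Laplacian of a function `z : ℝ³ → ℂ`, defined as the sum of the
second directional derivatives along the coordinate directions. -/
noncomputable def lap (z : EuclideanSpace ℝ (Fin 3) → ℂ)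
    (x : EuclideanSpace ℝ (Fin 3)) : ℂ :=
  ∑ i : Fin 3, iteratedDeriv 2 (fun t : ℝ => z (x + t • EuclideanSpace.single i (1 : ℝ))) 0

noncomputable section
local notation "𝔼" => EuclideanSpace ℝ (Fin 3)

def pderivCLM (_𝕜 : Type) (m : 𝔼) : 𝓢(𝔼, ℂ) →L[ℝ] 𝓢(𝔼, ℂ) :=
  LineDeriv.lineDerivOpCLM ℝ 𝓢(𝔼, ℂ) m

@[simp]
theorem SchwartzMap.pderivCLM_apply (𝕜 : Type) (m : 𝔼) (f : 𝓢(𝔼, ℂ)) (x : 𝔼) :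
    pderivCLM 𝕜 m f x = fderiv ℝ f x m := rfl

lemma key_alg {a b t N : ℝ} (ht : 0 ≤ t) (hN : 0 ≤ N) :
    a^2 * (a^2+b^2) * N^2 ≤ (t + (a^2-b^2)*N)^2 + (2*a*b*N)^2 := by
  rcases le_or_gt (a^2) (3*b^2) with h | h
  · nlinarith [sq_nonneg (t + (a^2-b^2)*N), mul_nonneg (mul_nonneg (sq_nonneg a) (sq_nonneg N)) (by linarith : (0:ℝ) ≤ 3*b^2 - a^2)]
  · nlinarith [mul_nonneg ht (mul_nonneg (by nlinarith : (0:ℝ) ≤ a^2-b^2) hN), sq_nonneg t, sq_nonneg (b*N), sq_nonneg (a*b*N)]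

lemma sqrt_re_pos {s : ℂ} (hs : s ∈ Complex.slitPlane) : 0 < (s ^ (1 / 2 : ℂ)).re := by
  have hs0 : s ≠ 0 := slitPlane_ne_zero hs
  rw [Complex.cpow_def_of_ne_zero hs0]
  rw [Complex.exp_re]
  have him : (Complex.log s * (1/2)).im = s.arg / 2 := by
    simp [Complex.mul_im, Complex.log_im]
    ring
  rw [him]
  have h1 : -Real.pi < s.arg := Complex.neg_pi_lt_arg s
  have h2 : s.arg < Real.pi := lt_of_le_of_ne (Complex.arg_le_pi s) (Complex.slitPlane_arg_ne_pi hs)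
  have : 0 < Real.cos (s.arg / 2) :=
    Real.cos_pos_of_mem_Ioo ⟨by linarith, by linarith⟩
  positivity

lemma lower_bound (s : ℂ) (hs : s ∈ Complex.slitPlane) (t N : ℝ) (ht : 0 ≤ t) (hN : 0 ≤ N) :
    (s ^ (1 / 2 : ℂ)).re * Real.sqrt ‖s‖ * N ≤ ‖(t:ℂ) + s * N‖ := by
  have hs0 : s ≠ 0 := slitPlane_ne_zero hs
  set w : ℂ := s ^ (1 / 2 : ℂ) with hw
  set a : ℝ := w.re
  set b : ℝ := w.im
  have hw2 : w * w = s := by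
    rw [hw, ← Complex.cpow_add _ _ hs0]
    norm_num
  have habsw : ‖w‖ * ‖w‖ = ‖s‖ := by
    rw [← norm_mul, hw2]
  have habs : Real.sqrt ‖s‖ = ‖w‖ := by
    rw [← habsw, Real.sqrt_mul_self (norm_nonneg w)]
  have hre : s.re = a^2 - b^2 := by
    rw [← hw2]; simp [Complex.mul_re]; ring
  have him : s.im = 2*a*b := by
    rw [← hw2]; simp [Complex.mul_im]; ring
  have hnsq : ‖s‖ = a^2 + b^2 := by
    rw [← habsw, ← sq, Complex.sq_norm, Complex.normSq_apply]; ring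
  have ha : 0 < a := sqrt_re_pos hs
  have hL : a * Real.sqrt ‖s‖ * N =
      Real.sqrt (a^2 * (a^2+b^2) * N^2) := by
    rw [hnsq] at habs ⊢
    rw [show a^2 * (a^2+b^2) * N^2 = (a * Real.sqrt (a^2+b^2) * N)^2 by
      rw [mul_pow, mul_pow, Real.sq_sqrt (by positivity)]]
    rw [Real.sqrt_sq (by positivity)]
  have hR : ‖(t:ℂ) + s * N‖ =
      Real.sqrt ((t + (a^2-b^2)*N)^2 + (2*a*b*N)^2) := by
    rw [Complex.norm_def, Complex.normSq_apply]
    congr 1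
    · simp [hre, him]
      ring
  rw [hL, hR]
  exact Real.sqrt_le_sqrt (key_alg ht hN)

abbrev vv (i : Fin 3) : 𝔼 := EuclideanSpace.single i (1:ℝ)

lemma hasDerivAt_schwartz_line (f : SchwartzMap 𝔼 ℂ) (i : Fin 3) (y : 𝔼) (t : ℝ) :
    HasDerivAt (fun t : ℝ => f (y + t • vv i))
      ((pderivCLM ℝ (vv i) f) (y + t • vv i)) t := by
  have h1 : HasDerivAt (fun t : ℝ => y + t • vv i) (vv i) t := by
    simpa using ((hasDerivAt_id t).smul_const (vv i)).const_add y
  have h2 := (f.differentiableAt.hasFDerivAt).comp_hasDerivAt t h1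
  simpa [SchwartzMap.pderivCLM_apply, Function.comp_def] using h2

lemma lap_eq (z : SchwartzMap 𝔼 ℂ) (x : 𝔼) :
    lap (⇑z) x = ∑ i : Fin 3, (pderivCLM ℝ (vv i) (pderivCLM ℝ (vv i) z)) x := by
  unfold lap
  refine Finset.sum_congr rfl fun i _ => ?_
  have hd1 : (deriv fun t : ℝ => z (x + t • vv i)) =
      fun t : ℝ => (pderivCLM ℝ (vv i) z) (x + t • vv i) := by
    funext t; exact (hasDerivAt_schwartz_line z i x t).deriv
  rw [show (2:ℕ) = 1 + 1 from rfl, iteratedDeriv_succ, iteratedDeriv_one, hd1]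
  have := (hasDerivAt_schwartz_line (pderivCLM ℝ (vv i) z) i x 0).deriv
  rw [this]
  norm_num

lemma int_mul_conj (f g : SchwartzMap 𝔼 ℂ) :
    Integrable (fun x => f x * (starRingEnd ℂ) (g x)) (volume : Measure 𝔼) := by
  have hg : Integrable (fun x => (starRingEnd ℂ) (g x)) (volume : Measure 𝔼) :=
    (Complex.conjCLE.toContinuousLinearMap).integrable_comp g.integrable
  exact hg.bdd_mul f.continuous.aestronglyMeasurable
    (Filter.Eventually.of_forall fun x => f.norm_le_seminorm ℝ x)

lemma ibp (f z : SchwartzMap 𝔼 ℂ) (i : Fin 3) :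
    ∫ x : 𝔼, f x * (starRingEnd ℂ) ((pderivCLM ℝ (vv i) z) x) =
      - ∫ x : 𝔼, (pderivCLM ℝ (vv i) f) x * (starRingEnd ℂ) (z x) := by
  have key := integral_bilinear_hasLineDerivAt_right_eq_neg_left_of_integrable
    (μ := (volume : Measure 𝔼)) (B := ContinuousLinearMap.mul ℝ ℂ)
    (f := ⇑f) (f' := ⇑(pderivCLM ℝ (vv i) f))
    (g := fun x => (starRingEnd ℂ) (z x))
    (g' := fun x => (starRingEnd ℂ) ((pderivCLM ℝ (vv i) z) x)) (v := vv i)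
    ?_ ?_ ?_ ?_ ?_
  · simpa using key
  · simpa using int_mul_conj (pderivCLM ℝ (vv i) f) z
  · simpa using int_mul_conj f (pderivCLM ℝ (vv i) z)
  · simpa using int_mul_conj f z
  · intro x _
    have := (f.differentiableAt.hasFDerivAt (x := x)).hasLineDerivAt (vv i)
    simpa [SchwartzMap.pderivCLM_apply] using this
  · intro x _
    have hz := (z.differentiableAt.hasFDerivAt (x := x))
    have := ((Complex.conjCLE.toContinuousLinearMap.hasFDerivAt).comp x hz).hasLineDerivAt (vv i)
    simpa [SchwartzMap.pderivCLM_apply, Function.comp_def] using this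

lemma schwartz_memL2 (f : SchwartzMap 𝔼 ℂ) :
    MemLp (⇑f) 2 (volume : Measure 𝔼) := by
  rw [memLp_two_iff_integrable_sq_norm f.continuous.aestronglyMeasurable]
  have hb : ∀ x : 𝔼, ‖(‖f x‖^2 : ℝ)‖ ≤ (SchwartzMap.seminorm ℝ 0 0) f * ‖f x‖ := by
    intro x
    rw [Real.norm_of_nonneg (by positivity), sq]
    exact mul_le_mul_of_nonneg_right (f.norm_le_seminorm ℝ x) (norm_nonneg _)
  exact (f.integrable.norm.const_mul _).mono'
    ((f.continuous.norm.pow 2).aestronglyMeasurable) (Filter.Eventually.of_forall hb)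

lemma mul_conj_self (w : ℂ) : w * (starRingEnd ℂ) w = ((‖w‖^2 : ℝ) : ℂ) := by
  rw [Complex.mul_conj]
  norm_cast
  rw [Complex.normSq_eq_norm_sq]

lemma self_int (f : SchwartzMap 𝔼 ℂ) :
    ∫ x : 𝔼, f x * (starRingEnd ℂ) (f x) = (((∫ x : 𝔼, ‖f x‖ ^ 2) : ℝ) : ℂ) := by
  simp_rw [mul_conj_self]
  exact integral_ofReal

lemma DD_int (z : SchwartzMap 𝔼 ℂ) (i : Fin 3) :
    ∫ x : 𝔼, (pderivCLM ℝ (vv i) (pderivCLM ℝ (vv i) z)) x * (starRingEnd ℂ) (z x) =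
      -(((∫ x : 𝔼, ‖(pderivCLM ℝ (vv i) z) x‖ ^ 2) : ℝ) : ℂ) := by
  have h1 := ibp (pderivCLM ℝ (vv i) z) z i
  rw [self_int (pderivCLM ℝ (vv i) z)] at h1
  linear_combination h1

/-- Resolvent a-priori estimate: for `s` in the slit plane with `ω := Re(s^{1/2}) > 0`
and a Schwartz function `z : ℝ³ → ℂ`, setting `g := −Δz + s·z` one has
`‖z‖_{L²(ℝ³)} ≤ ‖g‖_{L²(ℝ³)} / (ω · |s|^{1/2})`. -/
theorem stmt3 (s : ℂ) (hs : s ∈ Complex.slitPlane)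
    (z : SchwartzMap (EuclideanSpace ℝ (Fin 3)) ℂ)
    (g : EuclideanSpace ℝ (Fin 3) → ℂ)
    (hg : ∀ x, g x = -lap (⇑z) x + s * z x) :
    Real.sqrt (∫ x, ‖z x‖ ^ 2) ≤
      Real.sqrt (∫ x, ‖g x‖ ^ 2) /
        ((s ^ (1 / 2 : ℂ)).re * Real.sqrt ‖s‖) := by
  have hs0 : s ≠ 0 := slitPlane_ne_zero hs
  have hgG : ∀ x, g x =
      (s • z - (pderivCLM ℝ (vv 0) (pderivCLM ℝ (vv 0) z) +
        pderivCLM ℝ (vv 1) (pderivCLM ℝ (vv 1) z) +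
        pderivCLM ℝ (vv 2) (pderivCLM ℝ (vv 2) z))) x := by
    intro x
    rw [hg, lap_eq]
    simp only [Fin.sum_univ_three, SchwartzMap.sub_apply, SchwartzMap.add_apply,
      SchwartzMap.smul_apply, smul_eq_mul]
    ring
  set N : ℝ := ∫ x, ‖z x‖ ^ 2 with hN
  set A : Fin 3 → ℝ := fun i => ∫ x : 𝔼, ‖(pderivCLM ℝ (vv i) z) x‖ ^ 2 with hA
  have hN0 : 0 ≤ N := integral_nonneg fun x => by positivity
  have hA0 : ∀ i, 0 ≤ A i := fun i => integral_nonneg fun x => by positivity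
  have hI : ∀ i : Fin 3, Integrable
      (fun x : 𝔼 => (pderivCLM ℝ (vv i) (pderivCLM ℝ (vv i) z)) x * (starRingEnd ℂ) (z x))
      (volume : Measure 𝔼) := fun i => int_mul_conj _ z
  have hIsum : Integrable (fun x : 𝔼 =>
      (pderivCLM ℝ (vv 0) (pderivCLM ℝ (vv 0) z)) x * (starRingEnd ℂ) (z x) +
      (pderivCLM ℝ (vv 1) (pderivCLM ℝ (vv 1) z)) x * (starRingEnd ℂ) (z x) +
      (pderivCLM ℝ (vv 2) (pderivCLM ℝ (vv 2) z)) x * (starRingEnd ℂ) (z x))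
      (volume : Measure 𝔼) := ((hI 0).add (hI 1)).add (hI 2)
  have hI01 : Integrable (fun x : 𝔼 =>
      (pderivCLM ℝ (vv 0) (pderivCLM ℝ (vv 0) z)) x * (starRingEnd ℂ) (z x) +
      (pderivCLM ℝ (vv 1) (pderivCLM ℝ (vv 1) z)) x * (starRingEnd ℂ) (z x))
      (volume : Measure 𝔼) := (hI 0).add (hI 1)
  have hIz : Integrable (fun x : 𝔼 => s * (z x * (starRingEnd ℂ) (z x)))
      (volume : Measure 𝔼) := (int_mul_conj z z).const_mul s
  have hid : ∫ x, g x * (starRingEnd ℂ) (z x)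
      = ((A 0 + A 1 + A 2 : ℝ) : ℂ) + s * ((N : ℝ) : ℂ) := by
    have hptw : ∀ x : 𝔼, g x * (starRingEnd ℂ) (z x) =
        s * (z x * (starRingEnd ℂ) (z x))
          - ((pderivCLM ℝ (vv 0) (pderivCLM ℝ (vv 0) z)) x * (starRingEnd ℂ) (z x) +
             (pderivCLM ℝ (vv 1) (pderivCLM ℝ (vv 1) z)) x * (starRingEnd ℂ) (z x) +
             (pderivCLM ℝ (vv 2) (pderivCLM ℝ (vv 2) z)) x * (starRingEnd ℂ) (z x)) := by
      intro x
      rw [hg, lap_eq]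
      simp only [Fin.sum_univ_three]
      ring
    rw [integral_congr_ae (Filter.Eventually.of_forall hptw),
      integral_sub hIz hIsum, integral_add hI01 (hI 2),
      integral_add (hI 0) (hI 1), integral_const_mul,
      self_int z, DD_int z 0, DD_int z 1, DD_int z 2]
    push_cast
    ring
  have hlow : (s ^ (1 / 2 : ℂ)).re * Real.sqrt ‖s‖ * N ≤
      ‖∫ x, g x * (starRingEnd ℂ) (z x)‖ := by
    rw [hid]
    exact lower_bound s hs (A 0 + A 1 + A 2) N
      (by have h0 := hA0 0; have h1 := hA0 1; have h2 := hA0 2; linarith) hN0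
  have hup : ‖∫ x, g x * (starRingEnd ℂ) (z x)‖ ≤
      Real.sqrt (∫ x, ‖g x‖ ^ 2) * Real.sqrt N := by
    have hpow : ∀ (h : 𝔼 → ℂ), (fun x => ‖h x‖ ^ (2:ℝ)) = fun x => ‖h x‖ ^ (2:ℕ) := by
      intro h; funext x; rw [← Real.rpow_natCast ‖h x‖ 2]; norm_num
    calc ‖∫ x, g x * (starRingEnd ℂ) (z x)‖
        ≤ ∫ x, ‖g x * (starRingEnd ℂ) (z x)‖ := norm_integral_le_integral_norm _
      _ = ∫ x, ‖g x‖ * ‖z x‖ := by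
          simp_rw [norm_mul, RCLike.norm_conj]
      _ ≤ (∫ x, ‖g x‖ ^ (2:ℝ)) ^ (1/2 : ℝ) * (∫ x, ‖z x‖ ^ (2:ℝ)) ^ (1/2 : ℝ) := by
          have hconj : (2:ℝ).HolderConjugate 2 := Real.HolderConjugate.two_two
          have h2 : (ENNReal.ofReal (2:ℝ)) = 2 := by norm_num
          have hmemG : MemLp (fun x : 𝔼 => ‖g x‖) (ENNReal.ofReal (2:ℝ)) volume := by
            rw [h2]
            have heq : (fun x : 𝔼 => ‖g x‖) = fun x : 𝔼 =>
                ‖(s • z - (pderivCLM ℝ (vv 0) (pderivCLM ℝ (vv 0) z) +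
                  pderivCLM ℝ (vv 1) (pderivCLM ℝ (vv 1) z) +
                  pderivCLM ℝ (vv 2) (pderivCLM ℝ (vv 2) z))) x‖ := by
              funext x; rw [hgG]
            rw [heq]
            exact (schwartz_memL2 _).norm
          have hmemz : MemLp (fun x : 𝔼 => ‖z x‖) (ENNReal.ofReal (2:ℝ)) volume := by
            rw [h2]; exact (schwartz_memL2 z).norm
          exact integral_mul_le_Lp_mul_Lq_of_nonneg hconj
            (Filter.Eventually.of_forall fun x => norm_nonneg _)
            (Filter.Eventually.of_forall fun x => norm_nonneg _) hmemG hmemz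
      _ = Real.sqrt (∫ x, ‖g x‖ ^ 2) * Real.sqrt N := by
          rw [hpow, hpow, ← Real.sqrt_eq_rpow, ← Real.sqrt_eq_rpow]
  set R : ℝ := Real.sqrt (∫ x, ‖g x‖ ^ 2) with hR
  set D : ℝ := (s ^ (1 / 2 : ℂ)).re * Real.sqrt ‖s‖ with hD
  have hDpos : 0 < D :=
    mul_pos (sqrt_re_pos hs) (Real.sqrt_pos.mpr (norm_pos_iff.mpr hs0))
  rw [le_div_iff₀ hDpos]
  have hchain : D * N ≤ R * Real.sqrt N := le_trans hlow hup
  rcases eq_or_ne (Real.sqrt N) 0 with h0 | h0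
  · rw [h0, zero_mul]
    exact Real.sqrt_nonneg _
  · have hsN : 0 < Real.sqrt N := lt_of_le_of_ne (Real.sqrt_nonneg N) (Ne.symm h0)
    have h2 : D * Real.sqrt N * Real.sqrt N ≤ R * Real.sqrt N := by
      rw [mul_assoc, Real.mul_self_sqrt hN0]; exact hchain
    have h3 : D * Real.sqrt N ≤ R := (mul_le_mul_iff_of_pos_right hsN).mp h2
    linarith [h3]

end
end

section
/- Let s ∈ ℂ ∖ (−∞,0] and set ω := Re(s^{1/2}) > 0. For every Schwartz function z : ℝ³ → ℂ, setting g := −Δz + s·z, one has ‖∇z‖²_{L²(ℝ³)} + |s|·‖z‖²_{L²(ℝ³)} ≤ ω^{−2}·‖g‖²_{L²(ℝ³)}; that is, the weighted norm ‖z‖_{H¹_s} := (‖∇z‖²_{L²} + |s|‖z‖²_{L²})^{1/2} satisfies ‖z‖_{H¹_s} ≤ ‖g‖_{L²}/ω. -/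
/-- The partial derivative of `z : ℝ³ → ℂ` in the `i`-th coordinate direction. -/
noncomputable def pd (i : Fin 3) (z : EuclideanSpace ℝ (Fin 3) → ℂ)
    (x : EuclideanSpace ℝ (Fin 3)) : ℂ :=
  deriv (fun t : ℝ => z (x + t • EuclideanSpace.single i (1 : ℝ))) 0

/-!
Integrating by parts, the `L²` pairing of `z` with `g = s z - Δz` is `⟪z, g⟫ = ‖∇z‖² + s ‖z‖²`.
Writing `s = σ²` with `σ = s^{1/2}` and multiplying by `conj σ`, the real part is
`Re σ · (‖∇z‖² + |s| ‖z‖²)`, while Cauchy–Schwarz bounds it by `|σ| ‖z‖ ‖g‖`, and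
`|σ| ‖z‖ ≤ (‖∇z‖² + |s| ‖z‖²)^{1/2}`. Dividing by that square root gives the estimate.
-/

open MeasureTheory LineDeriv Laplacian ComplexConjugate
open scoped SchwartzMap

theorem Complex.re_cpow_inv_two_pos {s : ℂ} (hs : s ∈ slitPlane) : 0 < (s ^ (2⁻¹ : ℂ)).re := by
  rw [cpow_inv_two_re, Real.sqrt_pos]
  rcases mem_slitPlane_iff.1 hs with h | h
  · linarith [norm_nonneg s]
  · linarith [abs_lt.1 (abs_re_lt_norm.2 h)]

open Complex in
theorem re_sq_mul_le_norm_sq_of_inner_eq {H : Type*} [NormedAddCommGroup H]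
    [InnerProductSpace ℂ H] {z g : H} {a : ℝ} {s σ : ℂ} (ha : 0 ≤ a) (hσ : σ ^ 2 = s)
    (h : inner ℂ z g = a + s * (‖z‖ ^ 2 : ℝ)) :
    σ.re ^ 2 * (a + ‖s‖ * ‖z‖ ^ 2) ≤ ‖g‖ ^ 2 := by
  subst hσ
  rw [norm_pow]
  set X := a + ‖σ‖ ^ 2 * ‖z‖ ^ 2
  have hX : 0 ≤ X := by positivity
  have hre : (conj σ * inner ℂ z g).re = σ.re * X := by
    rw [h, show X = a + normSq σ * ‖z‖ ^ 2 by rw [normSq_eq_norm_sq]]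
    simp only [mul_re, add_re, add_im, conj_re, conj_im, ofReal_re, ofReal_im, pow_two,
      mul_im, normSq_apply]
    ring
  have hbound : |σ.re| * X ≤ ‖σ‖ * ‖z‖ * ‖g‖ :=
    calc |σ.re| * X = |(conj σ * inner ℂ z g).re| := by rw [hre, abs_mul, abs_of_nonneg hX]
      _ ≤ ‖conj σ * inner ℂ z g‖ := abs_re_le_norm _
      _ ≤ ‖σ‖ * (‖z‖ * ‖g‖) := by
        rw [norm_mul, norm_conj]
        gcongr
        exact norm_inner_le_norm z g
      _ = ‖σ‖ * ‖z‖ * ‖g‖ := by ring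
  have hσz : (‖σ‖ * ‖z‖) ^ 2 ≤ X := by rw [mul_pow]; linarith
  rcases hX.eq_or_lt with hX0 | hXpos
  · rw [← hX0, mul_zero]
    positivity
  refine le_of_mul_le_mul_right ?_ hXpos
  calc σ.re ^ 2 * X * X = (|σ.re| * X) ^ 2 := by rw [mul_pow, sq_abs]; ring
    _ ≤ (‖σ‖ * ‖z‖ * ‖g‖) ^ 2 := by gcongr
    _ = (‖σ‖ * ‖z‖) ^ 2 * ‖g‖ ^ 2 := by ring
    _ ≤ ‖g‖ ^ 2 * X := by rw [mul_comm]; gcongr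

namespace SchwartzMap

section LineDerivative

variable {E F : Type*} [NormedAddCommGroup E] [NormedSpace ℝ E]
  [NormedAddCommGroup F] [NormedSpace ℝ F]

theorem hasDerivAt_comp_add_smul (f : 𝓢(E, F)) (x v : E) (t : ℝ) :
    HasDerivAt (fun t : ℝ => f (x + t • v)) (∂_{v} f (x + t • v)) t := by
  have hline : HasDerivAt (fun t : ℝ => x + t • v) v t := by
    simpa using ((hasDerivAt_id t).smul_const v).const_add x
  exact (f.hasFDerivAt _).comp_hasDerivAt t hline

theorem iteratedDeriv_two_comp_add_smul (f : 𝓢(E, F)) (x v : E) :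
    iteratedDeriv 2 (fun t : ℝ => f (x + t • v)) 0 = ∂_{v} (∂_{v} f) x := by
  have hderiv (f : 𝓢(E, F)) :
      deriv (fun t : ℝ => f (x + t • v)) = fun t => ∂_{v} f (x + t • v) :=
    funext fun t => (f.hasDerivAt_comp_add_smul x v t).deriv
  rw [iteratedDeriv_succ, iteratedDeriv_one, hderiv, hderiv]
  simp only [zero_smul, add_zero]

end LineDerivative

section Lp

variable {E F : Type*} [NormedAddCommGroup E] [NormedSpace ℝ E] [MeasurableSpace E]
  [OpensMeasurableSpace E] [NormedAddCommGroup F] [NormedSpace ℝ F]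
  [SecondCountableTopologyEither E F] {μ : Measure E} [μ.HasTemperateGrowth]

theorem norm_toLp_two_sq (f : 𝓢(E, F)) : ‖f.toLp 2 μ‖ ^ 2 = ∫ x, ‖f x‖ ^ 2 ∂μ := by
  rw [norm_toLp' two_ne_zero ENNReal.ofNat_ne_top, ← Real.rpow_natCast,
    ← Real.rpow_mul (integral_nonneg fun x => by positivity)]
  norm_num

end Lp

section IntegrationByParts

variable {E : Type*} [NormedAddCommGroup E] [NormedSpace ℝ E] [FiniteDimensional ℝ E]
  [MeasurableSpace E] [BorelSpace E] {μ : Measure E} [μ.IsAddHaarMeasure]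

theorem inner_toLp_lineDerivOp_lineDerivOp (f : 𝓢(E, ℂ)) (v : E) :
    inner ℂ (f.toLp 2 μ) ((∂_{v} (∂_{v} f)).toLp 2 μ)
      = -inner ℂ ((∂_{v} f).toLp 2 μ) ((∂_{v} f).toLp 2 μ) := by
  -- the inner product of `ℂ`, `(a, b) ↦ conj a * b`, as an `ℝ`-bilinear map
  simpa only [inner_toL2_toL2_eq, RCLike.inner_apply', ContinuousLinearMap.comp_apply,
    ContinuousLinearMap.mul_apply', ContinuousLinearEquiv.coe_coe, Complex.conjCLE_apply] using
    integral_bilinear_lineDerivOp_right_eq_neg_left (μ := μ) f (∂_{v} f)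
      ((ContinuousLinearMap.mul ℝ ℂ).comp Complex.conjCLE.toContinuousLinearMap) v

end IntegrationByParts

section Laplacian

variable {E : Type*} [NormedAddCommGroup E] [InnerProductSpace ℝ E] [FiniteDimensional ℝ E]
  [MeasurableSpace E] [BorelSpace E] {μ : Measure E} [μ.IsAddHaarMeasure]

theorem inner_toLp_laplacian {ι : Type*} [Fintype ι] (b : OrthonormalBasis ι ℝ E)
    (f : 𝓢(E, ℂ)) :
    inner ℂ (f.toLp 2 μ) ((Δ f).toLp 2 μ) = -((∑ i, ‖(∂_{b i} f).toLp 2 μ‖ ^ 2 : ℝ) : ℂ) := by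
  have htoLp_sum := map_sum (toLpCLM ℂ ℂ 2 μ) (fun i => ∂_{b i} (∂_{b i} f)) Finset.univ
  simp only [toLpCLM_apply] at htoLp_sum
  rw [laplacian_eq_sum b, htoLp_sum, inner_sum]
  simp only [inner_toLp_lineDerivOp_lineDerivOp, inner_self_eq_norm_sq_to_K,
    RCLike.ofReal_eq_complex_ofReal]
  push_cast
  exact Finset.sum_neg_distrib _

theorem inner_toLp_smul_sub_laplacian {ι : Type*} [Fintype ι] (b : OrthonormalBasis ι ℝ E)
    (f : 𝓢(E, ℂ)) (s : ℂ) :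
    inner ℂ (f.toLp 2 μ) ((s • f - Δ f).toLp 2 μ)
      = ((∑ i, ‖(∂_{b i} f).toLp 2 μ‖ ^ 2 : ℝ) : ℂ) + s * (‖f.toLp 2 μ‖ ^ 2 : ℝ) := by
  have hlin := (toLpCLM ℂ ℂ 2 μ).map_sub (s • f) (Δ f)
  simp only [toLpCLM_apply, map_smul] at hlin
  rw [hlin, inner_sub_right, inner_smul_right, inner_toLp_laplacian b, inner_self_eq_norm_sq_to_K,
    RCLike.ofReal_eq_complex_ofReal]
  push_cast
  ring

end Laplacian

end SchwartzMap

theorem pd_eq_lineDerivOp (f : 𝓢(EuclideanSpace ℝ (Fin 3), ℂ)) (i : Fin 3)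
    (x : EuclideanSpace ℝ (Fin 3)) :
    pd i f x = ∂_{EuclideanSpace.basisFun (Fin 3) ℝ i} f x := by
  rw [EuclideanSpace.basisFun_apply, SchwartzMap.lineDerivOp_apply]
  rfl

theorem lap_eq_laplacian (f : 𝓢(EuclideanSpace ℝ (Fin 3), ℂ)) (x : EuclideanSpace ℝ (Fin 3)) :
    lap f x = Δ f x := by
  simp only [lap, SchwartzMap.laplacian_eq_sum (EuclideanSpace.basisFun (Fin 3) ℝ),
    sum_apply, EuclideanSpace.basisFun_apply,
    SchwartzMap.iteratedDeriv_two_comp_add_smul]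

/-- For `s` in the slit plane with `ω := Re(s^{1/2}) > 0` and a Schwartz function
`z : ℝ³ → ℂ`, setting `g := −Δz + s·z`, the weighted `H¹_s` estimate
`‖∇z‖²_{L²} + |s|·‖z‖²_{L²} ≤ ω^{−2}·‖g‖²_{L²}` holds. -/
theorem stmt4 (s : ℂ) (hs : s ∈ Complex.slitPlane)
    (z : SchwartzMap (EuclideanSpace ℝ (Fin 3)) ℂ)
    (g : EuclideanSpace ℝ (Fin 3) → ℂ)
    (hg : ∀ x, g x = -lap (⇑z) x + s * z x) :
    (∫ x, ∑ i : Fin 3, ‖pd i (⇑z) x‖ ^ 2) + ‖s‖ * ∫ x, ‖z x‖ ^ 2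
      ≤ ((s ^ (1 / 2 : ℂ)).re) ⁻¹ ^ 2 * ∫ x, ‖g x‖ ^ 2 := by
  set b := EuclideanSpace.basisFun (Fin 3) ℝ
  have hg_eq : g = ⇑(s • z - Δ z) := by
    ext x
    rw [hg, lap_eq_laplacian, sub_apply, smul_apply, smul_eq_mul]
    ring
  have hestimate := re_sq_mul_le_norm_sq_of_inner_eq (by positivity) (Complex.cpow_ofNat_inv_pow s 2)
    (SchwartzMap.inner_toLp_smul_sub_laplacian (μ := volume) b z s)
  simp_rw [pd_eq_lineDerivOp, hg_eq]
  rw [integral_finsetSum _ fun i _ => ((∂_{b i} z).memLp 2).integrable_norm_pow two_ne_zero]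
  simp only [← SchwartzMap.norm_toLp_two_sq]
  rw [one_div, inv_pow, ← div_eq_inv_mul,
    le_div_iff₀ (pow_pos (Complex.re_cpow_inv_two_pos hs) 2)]
  linarith
end

section
/- For every r > 0 and every complex number s with Re(s) > 0, the Laplace transform in time of the three-dimensional heat kernel equals the fundamental solution of −Δ + s: ∫_0^∞ e^{−s·t} · (4πt)^{−3/2} · e^{−r²/(4t)} dt = e^{−r·s^{1/2}} / (4πr), where s^{1/2} is the principal square root of s. -/
open MeasureTheory Real Set

lemma glasser_surj {a : ℝ} (ha : 0 < a) (v : ℝ) :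
    ∃ x ∈ Ioi (0:ℝ), x - a / x = v := by
  have h4 : (0:ℝ) ≤ v ^ 2 + 4 * a := by nlinarith [sq_nonneg v]
  set w := Real.sqrt (v ^ 2 + 4 * a) with hw
  have hw2 : w ^ 2 = v ^ 2 + 4 * a := Real.sq_sqrt h4
  have hwpos : 0 < w := Real.sqrt_pos.mpr (by nlinarith [sq_nonneg v])
  have hwv : -v < w := by nlinarith [abs_nonneg v, sq_abs v, neg_abs_le v, le_abs_self v]
  have hx : 0 < (v + w) / 2 := by linarith
  refine ⟨(v + w) / 2, hx, ?_⟩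
  have hdiv : a / ((v + w) / 2) = (v + w) / 2 - v := by
    rw [div_eq_iff hx.ne']
    nlinarith [hw2]
  rw [hdiv]; ring

lemma hasDeriv_inv_part {a x : ℝ} (hx : 0 < x) :
    HasDerivAt (fun y : ℝ => a / y) (-(a / x ^ 2)) x := by
  have h := ((hasDerivAt_inv hx.ne').const_mul a)
  simpa [div_eq_mul_inv, neg_div, mul_div_assoc] using h

lemma glasser_sub_deriv {a x : ℝ} (hx : 0 < x) :
    HasDerivAt (fun y : ℝ => y - a / y) (1 + a / x ^ 2) x := by
  have h := (hasDerivAt_id x).sub (hasDeriv_inv_part (a := a) hx)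
  simp only [sub_neg_eq_add] at h
  exact h

lemma glasser_inj {a : ℝ} (ha : 0 < a) :
    InjOn (fun x : ℝ => x - a / x) (Ioi 0) := by
  have : StrictMonoOn (fun x : ℝ => x - a / x) (Ioi 0) := by
    intro x hx y hy hxy
    simp only [mem_Ioi] at hx hy
    have : a / y < a / x := div_lt_div_of_pos_left ha hx hxy
    dsimp; linarith
  exact this.injOn

lemma glasser_image {a : ℝ} (ha : 0 < a) :
    (fun x : ℝ => x - a / x) '' Ioi 0 = univ := by
  apply eq_univ_of_forall
  intro v
  obtain ⟨x, hx, hxv⟩ := glasser_surj ha v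
  exact ⟨x, hx, hxv⟩

lemma inv_map_image {a : ℝ} (ha : 0 < a) :
    (fun x : ℝ => a / x) '' Ioi 0 = Ioi 0 := by
  apply Subset.antisymm
  · rintro y ⟨x, hx, rfl⟩
    exact div_pos ha hx
  · intro y hy
    exact ⟨a / y, div_pos ha hy, by field_simp⟩

lemma inv_map_inj {a : ℝ} (ha : 0 < a) : InjOn (fun x : ℝ => a / x) (Ioi 0) := by
  intro x hx y hy h
  simp only [mem_Ioi] at hx hy
  dsimp at h
  field_simp at h
  exact h.symm

lemma glasser_integrable {a : ℝ} (ha : 0 < a) :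
    IntegrableOn (fun x : ℝ => Real.exp (-(x - a / x) ^ 2)) (Ioi 0) := by
  have hint : IntegrableOn (fun x : ℝ => Real.exp (2 * a) * Real.exp (-x ^ 2)) (Ioi 0) := by
    refine Integrable.integrableOn ?_
    simpa [neg_mul, one_mul] using (integrable_exp_neg_mul_sq (one_pos)).const_mul (Real.exp (2 * a))
  refine Integrable.mono' hint ?_ ?_
  · refine (ContinuousOn.aestronglyMeasurable ?_ measurableSet_Ioi)
    refine Real.continuous_exp.comp_continuousOn ?_
    refine (ContinuousOn.neg ?_)
    exact ((continuousOn_id.sub (continuousOn_const.div continuousOn_id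
      (fun x hx => ne_of_gt hx))).pow 2)
  · filter_upwards [ae_restrict_mem measurableSet_Ioi] with x hx
    simp only [mem_Ioi] at hx
    rw [Real.norm_eq_abs, abs_of_pos (Real.exp_pos _), ← Real.exp_add]
    apply Real.exp_le_exp.mpr
    have h1 : (x - a / x) ^ 2 ≥ x ^ 2 - 2 * a := by
      have : (a / x) ^ 2 ≥ 0 := sq_nonneg _
      have hxx : x * (a / x) = a := by field_simp
      nlinarith [sq_nonneg (a / x)]
    linarith

lemma glasser_integral {a : ℝ} (ha : 0 < a) :
    ∫ x in Ioi (0:ℝ), Real.exp (-(x - a / x) ^ 2) = Real.sqrt π / 2 := by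
  have hmeas : MeasurableSet (Ioi (0:ℝ)) := measurableSet_Ioi
  set g : ℝ → ℝ := fun v => Real.exp (-v ^ 2) with hg
  -- substitution v = x - a/x : total integral
  have htot : ∫ v : ℝ, g v = ∫ x in Ioi (0:ℝ), |1 + a / x ^ 2| • g (x - a / x) := by
    rw [← setIntegral_univ, ← glasser_image ha]
    exact integral_image_eq_integral_abs_deriv_smul hmeas
      (fun x hx => (glasser_sub_deriv (mem_Ioi.mp hx)).hasDerivWithinAt) (glasser_inj ha) g
  -- substitution x ↦ a/x : symmetry
  have hsym : ∫ x in Ioi (0:ℝ), Real.exp (-(x - a / x) ^ 2)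
      = ∫ x in Ioi (0:ℝ), |(-(a / x ^ 2))| • Real.exp (-(x - a / x) ^ 2) := by
    conv_lhs => rw [← inv_map_image ha]
    rw [integral_image_eq_integral_abs_deriv_smul hmeas
      (fun x hx => (hasDeriv_inv_part (mem_Ioi.mp hx)).hasDerivWithinAt) (inv_map_inj ha)]
    apply setIntegral_congr_fun hmeas
    intro x hx
    simp only [mem_Ioi] at hx
    have h1 : a / x - a / (a / x) = -(x - a / x) := by
      rw [div_div_eq_mul_div]
      field_simp
      ring
    dsimp only
    rw [h1, neg_sq]
  -- integrability of second piece
  have hint2 : IntegrableOn (fun x : ℝ => |(-(a / x ^ 2))| • Real.exp (-(x - a / x) ^ 2))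
      (Ioi 0) := by
    have := (integrableOn_image_iff_integrableOn_abs_deriv_smul hmeas
      (fun x hx => (hasDeriv_inv_part (a := a) (mem_Ioi.mp hx)).hasDerivWithinAt)
      (inv_map_inj ha) (fun x => Real.exp (-(x - a / x) ^ 2))).mp
      (by rw [inv_map_image ha]; exact glasser_integrable ha)
    refine this.congr_fun ?_ hmeas
    intro x hx
    simp only [mem_Ioi] at hx
    have h1 : a / x - a / (a / x) = -(x - a / x) := by
      rw [div_div_eq_mul_div]
      field_simp
      ring
    dsimp only
    rw [h1, neg_sq]
  have hgauss : ∫ v : ℝ, g v = Real.sqrt π := by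
    have := integral_gaussian 1
    simpa [hg] using this
  have habs1 : ∀ x ∈ Ioi (0:ℝ), |1 + a / x ^ 2| • g (x - a / x)
      = Real.exp (-(x - a / x) ^ 2) + |(-(a / x ^ 2))| • Real.exp (-(x - a / x) ^ 2) := by
    intro x hx
    simp only [mem_Ioi] at hx
    have h2 : (0:ℝ) < a / x ^ 2 := div_pos ha (by positivity)
    rw [abs_of_pos (by linarith), abs_neg, abs_of_pos h2, hg]
    simp only [smul_eq_mul]
    ring
  have hF2 : ∫ x in Ioi (0:ℝ), |1 + a / x ^ 2| • g (x - a / x)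
      = (∫ x in Ioi (0:ℝ), Real.exp (-(x - a / x) ^ 2))
        + ∫ x in Ioi (0:ℝ), |(-(a / x ^ 2))| • Real.exp (-(x - a / x) ^ 2) := by
    rw [setIntegral_congr_fun hmeas habs1]
    exact integral_add (glasser_integrable ha) hint2
  have : Real.sqrt π = (∫ x in Ioi (0:ℝ), Real.exp (-(x - a / x) ^ 2))
      + ∫ x in Ioi (0:ℝ), Real.exp (-(x - a / x) ^ 2) := by
    rw [← hgauss, htot, hF2, ← hsym]
  linarith

lemma H_real {c : ℝ} (hc : 0 < c) :
    ∫ x in Ioi (0:ℝ), Real.exp (-x ^ 2 - c / x ^ 2)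
      = Real.sqrt π / 2 * Real.exp (-(2 * Real.sqrt c)) := by
  set a := Real.sqrt c with ha'
  have ha : 0 < a := Real.sqrt_pos.mpr hc
  have ha2 : a ^ 2 = c := Real.sq_sqrt hc.le
  have hcong : ∀ x ∈ Ioi (0:ℝ), Real.exp (-x ^ 2 - c / x ^ 2)
      = Real.exp (-(x - a / x) ^ 2) * Real.exp (-(2 * a)) := by
    intro x hx
    simp only [mem_Ioi] at hx
    rw [← Real.exp_add]
    congr 1
    have hxa : x * (a / x) = a := by field_simp
    have hsq : (a / x) ^ 2 = c / x ^ 2 := by rw [div_pow, ha2]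
    have hexp : (x - a / x) ^ 2 = x ^ 2 - 2 * a + c / x ^ 2 := by
      rw [sub_sq]
      rw [hsq]
      have : 2 * x * (a / x) = 2 * a := by rw [mul_assoc, hxa]
      linarith
    linarith
  rw [setIntegral_congr_fun measurableSet_Ioi hcong, integral_mul_const,
    glasser_integral ha]

lemma re_cpow_half_pos {z : ℂ} (hz : 0 < z.re) : 0 < (z ^ (1/2 : ℂ)).re := by
  have hz0 : z ≠ 0 := by
    intro h; rw [h] at hz; simp at hz
  rw [Complex.cpow_def_of_ne_zero hz0, Complex.exp_re]
  have him : (Complex.log z * (1/2 : ℂ)).im = z.arg / 2 := by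
    simp [Complex.mul_im, Complex.log_im]
    ring
  rw [him]
  have harg : |z.arg| < π / 2 := Complex.abs_arg_lt_pi_div_two_iff.mpr (Or.inl hz)
  have habs := abs_lt.mp harg
  have hcos : 0 < Real.cos (z.arg / 2) := by
    apply Real.cos_pos_of_mem_Ioo
    constructor <;> [linarith; linarith]
  positivity

lemma cpow_half_sq {z : ℂ} (hz : z ≠ 0) : z ^ (1/2 : ℂ) * z ^ (1/2 : ℂ) = z := by
  rw [← Complex.cpow_add _ _ hz]
  norm_num

lemma mul_ofReal_cpow_half {s : ℂ} (hs : 0 < s.re) {b : ℝ} (hb : 0 < b) :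
    (s * (b : ℂ)) ^ (1/2 : ℂ) = s ^ (1/2 : ℂ) * (Real.sqrt b : ℂ) := by
  have hs0 : s ≠ 0 := by intro h; rw [h] at hs; simp at hs
  have hsb : 0 < (s * (b : ℂ)).re := by
    simp only [Complex.mul_re, Complex.ofReal_re, Complex.ofReal_im, mul_zero, sub_zero]
    positivity
  have hsb0 : s * (b : ℂ) ≠ 0 := by
    intro h; rw [h] at hsb; simp at hsb
  set u := (s * (b : ℂ)) ^ (1/2 : ℂ) with hu'
  set w := s ^ (1/2 : ℂ) * (Real.sqrt b : ℂ) with hw'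
  have hu2 : u * u = s * (b : ℂ) := cpow_half_sq hsb0
  have hw2 : w * w = s * (b : ℂ) := by
    have h1 : (Real.sqrt b : ℂ) * (Real.sqrt b : ℂ) = (b : ℂ) := by
      rw [← Complex.ofReal_mul, Real.mul_self_sqrt hb.le]
    calc w * w = (s ^ (1/2:ℂ) * s ^ (1/2:ℂ)) * ((Real.sqrt b : ℂ) * (Real.sqrt b : ℂ)) := by
          rw [hw']; ring
      _ = s * (b : ℂ) := by rw [cpow_half_sq hs0, h1]
  have hure : 0 < u.re := re_cpow_half_pos hsb
  have hwre : 0 < w.re := by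
    have h1 : 0 < (s ^ (1/2:ℂ)).re := re_cpow_half_pos hs
    have hb' : 0 < Real.sqrt b := Real.sqrt_pos.mpr hb
    have : w.re = (s ^ (1/2:ℂ)).re * Real.sqrt b := by
      rw [hw']
      simp [Complex.mul_re, Complex.ofReal_re, Complex.ofReal_im]
    rw [this]; positivity
  have hzero : (u - w) * (u + w) = 0 := by
    have : u * u - w * w = 0 := by rw [hu2, hw2]; ring
    linear_combination this
  rcases mul_eq_zero.mp hzero with h | h
  · exact sub_eq_zero.mp h
  · exfalso
    have := congrArg Complex.re h
    simp only [Complex.add_re, Complex.zero_re] at this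
    linarith

noncomputable def Hc (c : ℂ) : ℂ :=
  ∫ x in Ioi (0:ℝ), Complex.exp (-(x:ℂ) ^ 2 - c / (x:ℂ) ^ 2)

lemma Hc_integrand_norm (c : ℂ) {x : ℝ} (hx : 0 < x) :
    ‖Complex.exp (-(x:ℂ) ^ 2 - c / (x:ℂ) ^ 2)‖ = Real.exp (-x ^ 2 - c.re / x ^ 2) := by
  rw [Complex.norm_exp]
  congr 1
  have hx2 : (x:ℂ) ^ 2 ≠ 0 := pow_ne_zero 2 (by exact_mod_cast hx.ne')
  have h1 : (-(x:ℂ) ^ 2 - c / (x:ℂ) ^ 2) = ((-x ^ 2 : ℝ) : ℂ) - c * (((x ^ 2)⁻¹ : ℝ) : ℂ) := by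
    push_cast
    field_simp
  rw [h1]
  simp only [Complex.sub_re, Complex.ofReal_re, Complex.mul_re, Complex.ofReal_im,
    mul_zero, sub_zero]
  rw [div_eq_mul_inv]

lemma Hc_contOn (c : ℂ) :
    ContinuousOn (fun x : ℝ => Complex.exp (-(x:ℂ) ^ 2 - c / (x:ℂ) ^ 2)) (Ioi 0) := by
  apply Complex.continuous_exp.comp_continuousOn
  apply ContinuousOn.sub
  · exact (Continuous.continuousOn (by continuity)).neg
  · apply ContinuousOn.div continuousOn_const
    · exact Continuous.continuousOn (by continuity)
    · intro x hx
      simp only [mem_Ioi] at hx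
      exact pow_ne_zero 2 (by exact_mod_cast hx.ne')

lemma integrable_aux {δ : ℝ} (hδ : 0 < δ) :
    IntegrableOn (fun x : ℝ => δ⁻¹ * Real.exp (-x ^ 2)) (Ioi 0) := by
  refine Integrable.integrableOn ?_
  simpa [neg_mul, one_mul] using (integrable_exp_neg_mul_sq one_pos).const_mul δ⁻¹

lemma deriv_bound {δ : ℝ} (hδ : 0 < δ) {x : ℝ} (hx : 0 < x) {c : ℂ} (hc : δ ≤ c.re) :
    ‖Complex.exp (-(x:ℂ) ^ 2 - c / (x:ℂ) ^ 2) * (-(1 / (x:ℂ) ^ 2))‖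
      ≤ δ⁻¹ * Real.exp (-x ^ 2) := by
  rw [norm_mul, Hc_integrand_norm c hx]
  have hx2 : (0:ℝ) < x ^ 2 := by positivity
  have hn : ‖(-(1 / (x:ℂ) ^ 2))‖ = (x ^ 2)⁻¹ := by
    rw [norm_neg, norm_div, norm_one]
    have : ((x:ℂ) ^ 2) = ((x ^ 2 : ℝ) : ℂ) := by push_cast; ring
    rw [this, Complex.norm_real, Real.norm_eq_abs, abs_of_pos hx2, one_div]
  rw [hn]
  have hx2 : (0:ℝ) < x ^ 2 := by positivity
  have h1 : Real.exp (-x ^ 2 - c.re / x ^ 2) ≤ Real.exp (-x ^ 2 - δ / x ^ 2) := by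
    apply Real.exp_le_exp.mpr
    have : δ / x ^ 2 ≤ c.re / x ^ 2 := by gcongr
    linarith
  have h2 : Real.exp (-x ^ 2 - δ / x ^ 2) * (x ^ 2)⁻¹ ≤ δ⁻¹ * Real.exp (-x ^ 2) := by
    rw [sub_eq_add_neg, Real.exp_add, Real.exp_neg (δ / x ^ 2)]
    have hexp : δ / x ^ 2 ≤ Real.exp (δ / x ^ 2) := by
      linarith [Real.add_one_le_exp (δ / x ^ 2)]
    have hd : δ ≤ Real.exp (δ / x ^ 2) * x ^ 2 := by
      have := mul_le_mul_of_nonneg_right hexp hx2.le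
      rwa [div_mul_cancel₀ _ hx2.ne'] at this
    have hinv : ((Real.exp (δ / x ^ 2)) * x ^ 2)⁻¹ ≤ δ⁻¹ := by
      apply inv_anti₀ hδ hd
    calc Real.exp (-x ^ 2) * (Real.exp (δ / x ^ 2))⁻¹ * (x ^ 2)⁻¹
        = Real.exp (-x ^ 2) * ((Real.exp (δ / x ^ 2)) * x ^ 2)⁻¹ := by
          rw [mul_inv]; ring
      _ ≤ Real.exp (-x ^ 2) * δ⁻¹ :=
          mul_le_mul_of_nonneg_left hinv (Real.exp_pos _).le
      _ = δ⁻¹ * Real.exp (-x ^ 2) := by ring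
  calc Real.exp (-x ^ 2 - c.re / x ^ 2) * (x ^ 2)⁻¹
      ≤ Real.exp (-x ^ 2 - δ / x ^ 2) * (x ^ 2)⁻¹ :=
        mul_le_mul_of_nonneg_right h1 (by positivity)
    _ ≤ δ⁻¹ * Real.exp (-x ^ 2) := h2

lemma Hc_integrable {c : ℂ} (hc : 0 < c.re) :
    IntegrableOn (fun x : ℝ => Complex.exp (-(x:ℂ) ^ 2 - c / (x:ℂ) ^ 2)) (Ioi 0) := by
  refine Integrable.mono' (integrable_aux one_pos) ?_ ?_
  · exact (Hc_contOn c).aestronglyMeasurable measurableSet_Ioi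
  · filter_upwards [ae_restrict_mem measurableSet_Ioi] with x hx
    simp only [mem_Ioi] at hx
    rw [Hc_integrand_norm c hx]
    have h1 : -x ^ 2 - c.re / x ^ 2 ≤ -x ^ 2 := by
      have : 0 ≤ c.re / x ^ 2 := by positivity
      linarith
    calc Real.exp (-x ^ 2 - c.re / x ^ 2) ≤ Real.exp (-x ^ 2) := Real.exp_le_exp.mpr h1
      _ ≤ (1:ℝ)⁻¹ * Real.exp (-x ^ 2) := by norm_num

lemma Hc_hasDerivAt {c₀ : ℂ} (hc : 0 < c₀.re) :
    HasDerivAt Hc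
      (∫ x in Ioi (0:ℝ), Complex.exp (-(x:ℂ) ^ 2 - c₀ / (x:ℂ) ^ 2) * (-(1 / (x:ℂ) ^ 2))) c₀ := by
  set ε := c₀.re / 2 with hε'
  have hε : 0 < ε := by positivity
  have key := hasDerivAt_integral_of_dominated_loc_of_deriv_le (μ := volume.restrict (Ioi 0))
    (F := fun c (x : ℝ) => Complex.exp (-(x:ℂ) ^ 2 - c / (x:ℂ) ^ 2))
    (F' := fun c (x : ℝ) => Complex.exp (-(x:ℂ) ^ 2 - c / (x:ℂ) ^ 2) * (-(1 / (x:ℂ) ^ 2)))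
    (x₀ := c₀) (bound := fun x => ε⁻¹ * Real.exp (-x ^ 2)) (Metric.ball_mem_nhds c₀ hε)
    ?_ ?_ ?_ ?_ ?_ ?_
  · exact key.2
  · filter_upwards with c
    exact (Hc_contOn c).aestronglyMeasurable measurableSet_Ioi
  · exact Hc_integrable hc
  · apply ContinuousOn.aestronglyMeasurable ?_ measurableSet_Ioi
    apply (Hc_contOn c₀).mul
    apply ContinuousOn.neg
    apply ContinuousOn.div continuousOn_const (Continuous.continuousOn (by continuity))
    intro x hx
    simp only [mem_Ioi] at hx
    exact pow_ne_zero 2 (by exact_mod_cast hx.ne')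
  · filter_upwards [ae_restrict_mem measurableSet_Ioi] with x hx c hcball
    simp only [mem_Ioi] at hx
    apply deriv_bound hε hx
    have h1 : |(c - c₀).re| ≤ ‖c - c₀‖ := Complex.abs_re_le_norm _
    have h2 : ‖c - c₀‖ < ε := by
      rw [Metric.mem_ball, dist_eq_norm] at hcball
      exact hcball
    have h3 : c₀.re - c.re ≤ |(c - c₀).re| := by
      rw [Complex.sub_re, abs_sub_comm]
      exact le_abs_self _
    have : c₀.re - c.re < ε := lt_of_le_of_lt (h3.trans h1) h2
    linarith [hε'.symm ▸ this]
  · exact integrable_aux hε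
  · filter_upwards [ae_restrict_mem measurableSet_Ioi] with x hx c _
    simp only [mem_Ioi] at hx
    have hx2 : ((x:ℂ) ^ 2) ≠ 0 := pow_ne_zero 2 (by exact_mod_cast hx.ne')
    have hinner : HasDerivAt (fun c : ℂ => -(x:ℂ) ^ 2 - c / (x:ℂ) ^ 2) (-(1 / (x:ℂ) ^ 2)) c := by
      have h := ((hasDerivAt_id c).div_const ((x:ℂ) ^ 2)).const_sub (-(x:ℂ) ^ 2)
      simpa [one_div] using h
    exact hinner.cexp

lemma Hc_real {t : ℝ} (ht : 0 < t) :
    Hc (t : ℂ) = (Real.sqrt π : ℂ) / 2 * Complex.exp (-2 * (t:ℂ) ^ (1/2 : ℂ)) := by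
  have h1 : Hc (t:ℂ) = ((∫ x in Ioi (0:ℝ), Real.exp (-x ^ 2 - t / x ^ 2) : ℝ) : ℂ) := by
    have h0 : ∫ x in Ioi (0:ℝ), ((Real.exp (-x ^ 2 - t / x ^ 2) : ℝ) : ℂ)
        = ((∫ x in Ioi (0:ℝ), Real.exp (-x ^ 2 - t / x ^ 2) : ℝ) : ℂ) := integral_ofReal
    rw [Hc, ← h0]
    apply setIntegral_congr_fun measurableSet_Ioi
    intro x hx
    dsimp only
    rw [Complex.ofReal_exp]
    congr 1
    push_cast
    ring
  rw [h1, H_real ht]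
  have h2 : ((t:ℂ)) ^ (1/2:ℂ) = ((Real.sqrt t : ℝ) : ℂ) := by
    rw [Real.sqrt_eq_rpow, Complex.ofReal_cpow ht.le]
    norm_num
  rw [h2]
  push_cast [Complex.ofReal_exp]
  ring

lemma Hc_eq {c : ℂ} (hc : 0 < c.re) :
    Hc c = (Real.sqrt π : ℂ) / 2 * Complex.exp (-2 * c ^ (1/2 : ℂ)) := by
  set U : Set ℂ := {z | 0 < z.re} with hU'
  have hUo : IsOpen U := isOpen_lt continuous_const Complex.continuous_re
  have hUc : IsPreconnected U := (convex_halfSpace_re_gt 0).isPreconnected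
  have hf : AnalyticOnNhd ℂ Hc U := by
    apply DifferentiableOn.analyticOnNhd ?_ hUo
    intro z hz
    exact ((Hc_hasDerivAt hz).differentiableAt).differentiableWithinAt
  have hg : AnalyticOnNhd ℂ
      (fun z : ℂ => (Real.sqrt π : ℂ) / 2 * Complex.exp (-2 * z ^ (1/2:ℂ))) U := by
    apply DifferentiableOn.analyticOnNhd ?_ hUo
    intro z hz
    apply DifferentiableAt.differentiableWithinAt
    apply DifferentiableAt.const_mul
    apply DifferentiableAt.cexp
    apply DifferentiableAt.const_mul
    exact (differentiableAt_id.cpow (differentiableAt_const _) (Or.inl hz))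
  have h1U : (1:ℂ) ∈ U := by simp [hU']
  have htendR : Filter.Tendsto (fun n : ℕ => (1 + ((n:ℝ) + 1)⁻¹ : ℝ)) Filter.atTop (nhds 1) := by
    have h0 : Filter.Tendsto (fun n : ℕ => ((n:ℝ) + 1)⁻¹) Filter.atTop (nhds 0) :=
      tendsto_one_div_add_atTop_nhds_zero_nat.congr (by intro n; rw [one_div])
    simpa using (tendsto_const_nhds.add h0)
  have htend : Filter.Tendsto (fun n : ℕ => ((1 + ((n:ℝ) + 1)⁻¹ : ℝ) : ℂ)) Filter.atTop
      (nhdsWithin (1:ℂ) {(1:ℂ)}ᶜ) := by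
    apply tendsto_nhdsWithin_of_tendsto_nhds_of_eventually_within
    · have := (Complex.continuous_ofReal.tendsto (1:ℝ)).comp htendR
      simpa [Function.comp_def] using this
    · filter_upwards with n
      simp only [mem_compl_iff, mem_singleton_iff]
      intro h
      have : (1 + ((n:ℝ) + 1)⁻¹ : ℝ) = 1 := by exact_mod_cast h
      have hpos : (0:ℝ) < ((n:ℝ) + 1)⁻¹ := by positivity
      linarith
  have hfreq : ∃ᶠ z in nhdsWithin (1:ℂ) {(1:ℂ)}ᶜ,
      Hc z = (Real.sqrt π : ℂ) / 2 * Complex.exp (-2 * z ^ (1/2:ℂ)) := by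
    apply htend.frequently
    apply Filter.Frequently.of_forall
    intro n
    exact Hc_real (by positivity)
  exact hf.eqOn_of_preconnected_of_frequently_eq hg hUc h1U hfreq hc

lemma sqrt_quarter_sq {r : ℝ} (hr : 0 < r) : Real.sqrt (r ^ 2 / 4) = r / 2 := by
  have h : r ^ 2 / 4 = (r / 2) ^ 2 := by ring
  rw [h, Real.sqrt_sq (by linarith)]

lemma const_eval {r : ℝ} (hr : 0 < r) :
    r ^ 2 / 2 * (π * r ^ 2) ^ (-(3:ℝ) / 2) * (Real.sqrt π / 2) = 1 / (4 * π * r) := by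
  have hA : 0 < π * r ^ 2 := by positivity
  have h1 : (π * r ^ 2) ^ (-(3:ℝ) / 2) = ((Real.sqrt (π * r ^ 2)) ^ 3)⁻¹ := by
    rw [Real.sqrt_eq_rpow]
    rw [← Real.rpow_natCast ((π * r ^ 2) ^ ((1:ℝ)/2)) 3, ← Real.rpow_mul hA.le]
    rw [← Real.rpow_neg hA.le]
    norm_num
  have h2 : Real.sqrt (π * r ^ 2) = Real.sqrt π * r := by
    rw [Real.sqrt_mul Real.pi_pos.le, Real.sqrt_sq hr.le]
  have hsq : Real.sqrt π * Real.sqrt π = π := Real.mul_self_sqrt Real.pi_pos.le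
  have hs : 0 < Real.sqrt π := Real.sqrt_pos.mpr Real.pi_pos
  rw [h1, h2]
  field_simp
  linear_combination (-4) * hsq

lemma heat_sub_image {r : ℝ} (hr : 0 < r) :
    (fun x : ℝ => r ^ 2 / (4 * x ^ 2)) '' Ioi 0 = Ioi 0 := by
  apply Subset.antisymm
  · rintro t ⟨x, hx, rfl⟩
    simp only [mem_Ioi] at hx ⊢
    positivity
  · intro t ht
    simp only [mem_Ioi] at ht
    refine ⟨r / (2 * Real.sqrt t), mem_Ioi.mpr (by positivity), ?_⟩
    have hst : Real.sqrt t ^ 2 = t := Real.sq_sqrt ht.le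
    have hst0 : Real.sqrt t ≠ 0 := (Real.sqrt_pos.mpr ht).ne'
    dsimp only
    rw [div_pow, mul_pow, hst]
    field_simp
    ring

lemma heat_sub_inj {r : ℝ} (hr : 0 < r) :
    InjOn (fun x : ℝ => r ^ 2 / (4 * x ^ 2)) (Ioi 0) := by
  intro x hx y hy h
  simp only [mem_Ioi] at hx hy
  dsimp at h
  have hx2 : (4 * x ^ 2) ≠ 0 := by positivity
  have hy2 : (4 * y ^ 2) ≠ 0 := by positivity
  field_simp at h
  have : x ^ 2 = y ^ 2 := by nlinarith [sq_nonneg r, hr]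
  nlinarith

lemma heat_sub_deriv {r x : ℝ} (hr : 0 < r) (hx : 0 < x) :
    HasDerivAt (fun y : ℝ => r ^ 2 / (4 * y ^ 2)) (-(r ^ 2 / (2 * x ^ 3))) x := by
  have hx2 : x ^ 2 ≠ 0 := by positivity
  have h := ((hasDerivAt_pow 2 x).inv hx2).const_mul (r ^ 2 / 4)
  have heq : (fun y : ℝ => r ^ 2 / 4 * (y ^ 2)⁻¹) = fun y : ℝ => r ^ 2 / (4 * y ^ 2) := by
    funext y
    rw [div_mul_eq_mul_div, mul_comm (4:ℝ) (y ^ 2), ← div_div, div_eq_mul_inv (r ^ 2) (y ^ 2)]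
  simp only [Pi.inv_apply] at h
  rw [heq] at h
  refine h.congr_deriv ?_
  field_simp
  ring

/-- Laplace transform of the 3D heat kernel: for `r > 0` and `Re(s) > 0`,
`∫_0^∞ e^{−s t} (4πt)^{−3/2} e^{−r²/(4t)} dt = e^{−r·s^{1/2}} / (4πr)`,
where `s^{1/2}` is the principal square root of `s`. -/
theorem stmt7 (r : ℝ) (hr : 0 < r) (s : ℂ) (hs : 0 < s.re) :
    (∫ t in Set.Ioi (0 : ℝ),
        Complex.exp (-s * (t : ℂ)) *
          (((4 * Real.pi * t) ^ (-(3 : ℝ) / 2) * Real.exp (-r ^ 2 / (4 * t)) : ℝ) : ℂ))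
      = Complex.exp (-(r : ℂ) * s ^ (1 / 2 : ℂ)) / (4 * Real.pi * r) := by
  set c : ℂ := s * ((r ^ 2 / 4 : ℝ) : ℂ) with hc'
  have hcre : 0 < c.re := by
    rw [hc']
    simp only [Complex.mul_re, Complex.ofReal_re, Complex.ofReal_im, mul_zero, sub_zero]
    positivity
  set G : ℝ → ℂ := fun t =>
    Complex.exp (-s * (t : ℂ)) *
      (((4 * Real.pi * t) ^ (-(3 : ℝ) / 2) * Real.exp (-r ^ 2 / (4 * t)) : ℝ) : ℂ) with hG'
  set C : ℝ := r ^ 2 / 2 * (π * r ^ 2) ^ (-(3:ℝ) / 2) with hC'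
  have hsub : ∫ t in Ioi (0:ℝ), G t
      = ∫ x in Ioi (0:ℝ), |(-(r ^ 2 / (2 * x ^ 3)))| • G (r ^ 2 / (4 * x ^ 2)) := by
    conv_lhs => rw [← heat_sub_image hr]
    exact integral_image_eq_integral_abs_deriv_smul measurableSet_Ioi
      (fun x hx => (heat_sub_deriv hr (mem_Ioi.mp hx)).hasDerivWithinAt)
      (heat_sub_inj hr) G
  have hpt : ∀ x ∈ Ioi (0:ℝ), |(-(r ^ 2 / (2 * x ^ 3)))| • G (r ^ 2 / (4 * x ^ 2))
      = (C : ℂ) * Complex.exp (-(x:ℂ) ^ 2 - c / (x:ℂ) ^ 2) := by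
    intro x hx
    simp only [mem_Ioi] at hx
    have hx3 : (0:ℝ) < x ^ 3 := by positivity
    have habs : |(-(r ^ 2 / (2 * x ^ 3)))| = r ^ 2 / (2 * x ^ 3) := by
      rw [abs_neg, abs_of_pos (by positivity)]
    -- the argument t
    set t : ℝ := r ^ 2 / (4 * x ^ 2) with ht'
    have htpos : 0 < t := by rw [ht']; positivity
    have h4pit : 4 * π * t = π * r ^ 2 / x ^ 2 := by
      rw [ht']; field_simp
    have hrt : -r ^ 2 / (4 * t) = -x ^ 2 := by
      rw [ht']
      field_simp
    have hrpow : (4 * π * t) ^ (-(3:ℝ) / 2) = (π * r ^ 2) ^ (-(3:ℝ) / 2) * x ^ 3 := by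
      rw [h4pit, Real.div_rpow (by positivity) (sq_nonneg x)]
      have hx2 : (x ^ 2 : ℝ) ^ (-(3:ℝ) / 2) = (x ^ 3)⁻¹ := by
        rw [← Real.rpow_natCast x 2, ← Real.rpow_mul hx.le]
        norm_num
      rw [hx2, div_eq_mul_inv, inv_inv]
    have h1 : -s * (t:ℂ) = -(c / (x:ℂ) ^ 2) := by
      rw [hc', ht']
      have hx0 : ((x:ℂ)) ^ 2 ≠ 0 := pow_ne_zero 2 (by exact_mod_cast hx.ne')
      push_cast
      field_simp
    have h2 : Real.exp (-r ^ 2 / (4 * t)) = Real.exp (-x ^ 2) := by rw [hrt]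
    have hCC : (r ^ 2 / (2 * x ^ 3)) * ((π * r ^ 2) ^ (-(3:ℝ) / 2) * x ^ 3) = C := by
      rw [hC']
      field_simp
    calc |(-(r ^ 2 / (2 * x ^ 3)))| • G t
        = (((r ^ 2 / (2 * x ^ 3)) * ((π * r ^ 2) ^ (-(3:ℝ) / 2) * x ^ 3) : ℝ) : ℂ) *
            (Complex.exp (-(c / (x:ℂ) ^ 2)) * Complex.exp (((-x ^ 2 : ℝ) : ℂ))) := by
          rw [habs, Complex.real_smul, hG']
          dsimp only
          rw [h1, hrpow, h2]
          push_cast [Complex.ofReal_exp]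
          ring
      _ = (C : ℂ) * Complex.exp (-(x:ℂ) ^ 2 - c / (x:ℂ) ^ 2) := by
          rw [hCC, ← Complex.exp_add]
          congr 1
          push_cast
          ring
  rw [hsub, setIntegral_congr_fun measurableSet_Ioi hpt, integral_const_mul]
  have hHc : (∫ x in Ioi (0:ℝ), Complex.exp (-(x:ℂ) ^ 2 - c / (x:ℂ) ^ 2)) = Hc c := rfl
  rw [hHc, Hc_eq hcre]
  have hhalf : c ^ (1/2 : ℂ) = s ^ (1/2 : ℂ) * (((r/2 : ℝ)) : ℂ) := by
    rw [hc', mul_ofReal_cpow_half hs (show (0:ℝ) < r ^ 2 / 4 by positivity),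
      sqrt_quarter_sq hr]
  have hexparg : -2 * c ^ (1/2:ℂ) = -(r:ℂ) * s ^ (1/2:ℂ) := by
    rw [hhalf]
    push_cast
    ring
  have hconst : (C : ℂ) * ((Real.sqrt π : ℂ) / 2) = 1 / (4 * (π:ℂ) * r) := by
    have hre := const_eval hr
    have hre' : C * (Real.sqrt π / 2) = 1 / (4 * π * r) := by rw [hC']; exact hre
    have h0 : ((C * (Real.sqrt π / 2) : ℝ) : ℂ) = ((1 / (4 * π * r) : ℝ) : ℂ) :=
      congrArg Complex.ofReal hre'
    calc (C : ℂ) * ((Real.sqrt π : ℂ) / 2)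
        = ((C * (Real.sqrt π / 2) : ℝ) : ℂ) := by push_cast; ring
      _ = ((1 / (4 * π * r) : ℝ) : ℂ) := h0
      _ = 1 / (4 * (π:ℂ) * r) := by push_cast; ring
  rw [hexparg, ← mul_assoc, hconst]
  ring
end

section
/- For all κ > 0, r > 0 and t > 0, define φ_{κ,r}(t) := ∫_0^t ( κ^{3/2} · r³ / (4√π · (t−τ)^{5/2}) ) · e^{−κ r²/(4(t−τ))} dτ. Then |φ_{κ,r}(t) − 1| ≤ κ^{3/2} · r³ / (6√π · t^{3/2}). -/
open Real MeasureTheory Filter Set intervalIntegral Topology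

noncomputable def myG (x : ℝ) : ℝ := ∫ u in (0:ℝ)..x, u ^ 2 * Real.exp (-u ^ 2)

lemma myG_hasDerivAt (x : ℝ) : HasDerivAt myG (x ^ 2 * Real.exp (-x ^ 2)) x :=
  ((continuous_pow 2).mul ((continuous_pow 2).neg.rexp)).integral_hasStrictDerivAt 0 x
    |>.hasDerivAt

lemma myG_nonneg {x : ℝ} (hx : 0 ≤ x) : 0 ≤ myG x := by
  apply intervalIntegral.integral_nonneg hx
  intro u _
  positivity

lemma myG_le {x : ℝ} (hx : 0 ≤ x) : myG x ≤ x ^ 3 / 3 := by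
  have h : myG x ≤ ∫ u in (0:ℝ)..x, u ^ 2 := by
    apply intervalIntegral.integral_mono_on hx
    · exact ((continuous_pow 2).mul ((continuous_pow 2).neg.rexp)).intervalIntegrable 0 x
    · exact (continuous_pow 2).intervalIntegrable 0 x
    · intro u hu
      nlinarith [Real.exp_le_one_iff.mpr (neg_nonpos.mpr (sq_nonneg u)), sq_nonneg u,
        Real.exp_pos (-u ^ 2)]
  calc myG x ≤ ∫ u in (0:ℝ)..x, u ^ 2 := h
    _ = x ^ 3 / 3 := by rw [integral_pow]; norm_num

lemma myG_eq (x : ℝ) :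
    myG x = (∫ u in (0:ℝ)..x, Real.exp (-u ^ 2)) / 2 - x / 2 * Real.exp (-x ^ 2) := by
  have key : ∀ u : ℝ, HasDerivAt
      (fun y => (∫ v in (0:ℝ)..y, Real.exp (-v ^ 2)) / 2 - y / 2 * Real.exp (-y ^ 2))
      (u ^ 2 * Real.exp (-u ^ 2)) u := by
    intro u
    have h1 : HasDerivAt (fun y : ℝ => (∫ v in (0:ℝ)..y, Real.exp (-v ^ 2)) / 2)
        (Real.exp (-u ^ 2) / 2) u :=
      (((continuous_pow 2).neg.rexp).integral_hasStrictDerivAt 0 u).hasDerivAt.div_const 2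
    have h2 : HasDerivAt (fun y : ℝ => y / 2 * Real.exp (-y ^ 2))
        (1 / 2 * Real.exp (-u ^ 2) + u / 2 * (Real.exp (-u ^ 2) * (-(2 * u)))) u := by
      have ha : HasDerivAt (fun y : ℝ => y / 2) (1 / 2) u := (hasDerivAt_id u).div_const 2
      have hb : HasDerivAt (fun y : ℝ => Real.exp (-y ^ 2))
          (Real.exp (-u ^ 2) * (-(2 * u))) u := by
        have : HasDerivAt (fun y : ℝ => -y ^ 2) (-(2 * u)) u := by
          simpa using (hasDerivAt_pow 2 u).fun_neg
        exact this.exp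
      simpa [mul_comm] using ha.fun_mul hb
    have := h1.fun_sub h2
    exact this.congr_deriv (by ring)
  have := intervalIntegral.integral_eq_sub_of_hasDerivAt (f' := fun u => u ^ 2 * Real.exp (-u ^ 2))
    (fun u _ => key u)
    (((continuous_pow 2).mul ((continuous_pow 2).neg.rexp)).intervalIntegrable 0 x)
  simpa [myG] using this

lemma myG_tendsto : Tendsto myG atTop (nhds (Real.sqrt Real.pi / 4)) := by
  have h1 : Tendsto (fun x : ℝ => (∫ u in (0:ℝ)..x, Real.exp (-u ^ 2)) / 2) atTop
      (nhds (Real.sqrt Real.pi / 4)) := by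
    have hint : IntegrableOn (fun u : ℝ => Real.exp (-u ^ 2)) (Ioi 0) := by
      simpa using (integrable_exp_neg_mul_sq (one_pos)).integrableOn (s := Ioi (0:ℝ))
    have ht := intervalIntegral_tendsto_integral_Ioi 0 hint tendsto_id
    have hval : ∫ u in Ioi (0:ℝ), Real.exp (-u ^ 2) = Real.sqrt Real.pi / 2 := by
      simpa using integral_gaussian_Ioi 1
    rw [hval] at ht
    convert ht.div_const 2 using 2
    · rfl
    · ring
  have h2 : Tendsto (fun x : ℝ => x / 2 * Real.exp (-x ^ 2)) atTop (nhds 0) := by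
    have hlo := rpow_mul_exp_neg_mul_sq_isLittleO_exp_neg one_pos (1 : ℝ)
    have hexp : Tendsto (fun x : ℝ => Real.exp (-(1 / 2) * x)) atTop (nhds 0) := by
      have h := Real.tendsto_exp_neg_atTop_nhds_zero.comp
        ((tendsto_id (α := ℝ)).const_mul_atTop (by norm_num : (0:ℝ) < 1/2))
      refine h.congr fun x => ?_
      show Real.exp (-(1 / 2 * x)) = Real.exp (-(1 / 2) * x)
      ring_nf
    have h := hlo.isBigO.trans_tendsto hexp
    have h' := h.div_const 2
    rw [zero_div] at h'
    refine h'.congr fun x => ?_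
    rw [Real.rpow_one, neg_one_mul]
    ring
  have h3 := h1.sub h2
  rw [sub_zero] at h3
  exact h3.congr fun x => (myG_eq x).symm

lemma cube_le_exp {x : ℝ} (hx : 0 ≤ x) : x ^ 3 / 27 ≤ Real.exp x := by
  have h1 : x / 3 ≤ Real.exp (x / 3) := by linarith [Real.add_one_le_exp (x / 3)]
  have h2 : (x / 3) ^ 3 ≤ Real.exp (x / 3) ^ 3 := pow_le_pow_left₀ (by positivity) h1 3
  have h3 : Real.exp (x / 3) ^ 3 = Real.exp x := by
    rw [← Real.exp_nat_mul]; congr 1; push_cast; ring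
  calc x ^ 3 / 27 = (x / 3) ^ 3 := by ring
    _ ≤ Real.exp (x / 3) ^ 3 := h2
    _ = Real.exp x := h3

lemma phi_integrable {b t : ℝ} (hb : 0 < b) (ht : 0 < t) :
    IntervalIntegrable (fun τ => 2 * b ^ 3 / (Real.sqrt Real.pi * Real.sqrt (t - τ) ^ 5) *
      Real.exp (-b ^ 2 / (t - τ))) volume 0 t := by
  have hπ : 0 < Real.sqrt Real.pi := Real.sqrt_pos.mpr Real.pi_pos
  have hfm : Measurable (fun τ => 2 * b ^ 3 / (Real.sqrt Real.pi * Real.sqrt (t - τ) ^ 5) *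
      Real.exp (-b ^ 2 / (t - τ))) := by
    apply Measurable.mul
    · exact measurable_const.div
        (measurable_const.mul ((measurable_const.sub measurable_id').sqrt.pow_const 5))
    · exact (measurable_const.div (measurable_const.sub measurable_id')).exp
  rw [intervalIntegrable_iff_integrableOn_Icc_of_le ht.le]
  constructor
  · exact hfm.aestronglyMeasurable.restrict
  · apply HasFiniteIntegral.restrict_of_bounded
      (C := 54 * Real.sqrt t / (Real.sqrt Real.pi * b ^ 3))
      (by rw [Real.volume_Icc]; exact ENNReal.ofReal_lt_top)
    apply ae_restrict_of_forall_mem measurableSet_Icc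
    intro τ hτ
    rw [Real.norm_eq_abs]
    rcases eq_or_lt_of_le hτ.2 with h | h
    · have h0 : t - τ = 0 := by rw [h]; ring
      simp only [h0, Real.sqrt_zero]
      rw [show (0:ℝ) ^ 5 = 0 by norm_num, mul_zero, div_zero, zero_mul, abs_zero]
      positivity
    · have hu : 0 < t - τ := by linarith
      have hv : 0 < Real.sqrt (t - τ) := Real.sqrt_pos.mpr hu
      set v := Real.sqrt (t - τ) with hvdef
      have hv2 : v ^ 2 = t - τ := Real.sq_sqrt hu.le
      have hvt : v ≤ Real.sqrt t := Real.sqrt_le_sqrt (by linarith [hτ.1])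
      have he : Real.exp (-b ^ 2 / (t - τ)) ≤ 27 * v ^ 6 / b ^ 6 := by
        have h1 : (b ^ 2 / (t - τ)) ^ 3 / 27 ≤ Real.exp (b ^ 2 / (t - τ)) :=
          cube_le_exp (by positivity)
        rw [neg_div, Real.exp_neg]
        calc (Real.exp (b ^ 2 / (t - τ)))⁻¹ ≤ ((b ^ 2 / (t - τ)) ^ 3 / 27)⁻¹ := by
              apply inv_anti₀ (by positivity) h1
          _ = 27 * v ^ 6 / b ^ 6 := by rw [← hv2]; field_simp
      rw [abs_of_nonneg (by positivity)]
      calc 2 * b ^ 3 / (Real.sqrt Real.pi * v ^ 5) * Real.exp (-b ^ 2 / (t - τ))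
          ≤ 2 * b ^ 3 / (Real.sqrt Real.pi * v ^ 5) * (27 * v ^ 6 / b ^ 6) := by
            apply mul_le_mul_of_nonneg_left he (by positivity)
        _ = 54 * v / (Real.sqrt Real.pi * b ^ 3) := by field_simp; ring
        _ ≤ 54 * Real.sqrt t / (Real.sqrt Real.pi * b ^ 3) := by gcongr


lemma phi_hasDerivAt {b t τ : ℝ} (hu : 0 < t - τ) :
    HasDerivAt (fun s => 4 / Real.sqrt Real.pi * myG (b / Real.sqrt (t - s)))
      (2 * b ^ 3 / (Real.sqrt Real.pi * Real.sqrt (t - τ) ^ 5) *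
        Real.exp (-b ^ 2 / (t - τ))) τ := by
  have hπ : 0 < Real.sqrt Real.pi := Real.sqrt_pos.mpr Real.pi_pos
  have hv : 0 < Real.sqrt (t - τ) := Real.sqrt_pos.mpr hu
  have h1 : HasDerivAt (fun s : ℝ => t - s) (-1) τ := by
    simpa using (hasDerivAt_id τ).const_sub t
  have h2 : HasDerivAt (fun s => Real.sqrt (t - s)) (-1 / (2 * Real.sqrt (t - τ))) τ :=
    h1.sqrt hu.ne'
  have h3 : HasDerivAt (fun s => b * (Real.sqrt (t - s))⁻¹)
      (b * (-(-1 / (2 * Real.sqrt (t - τ))) / Real.sqrt (t - τ) ^ 2)) τ :=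
    (h2.inv hv.ne').const_mul b
  have h3' : HasDerivAt (fun s => b / Real.sqrt (t - s))
      (b * (-(-1 / (2 * Real.sqrt (t - τ))) / Real.sqrt (t - τ) ^ 2)) τ := by
    simpa only [div_eq_mul_inv] using h3
  have h4 := ((myG_hasDerivAt (b / Real.sqrt (t - τ))).comp τ h3').const_mul
      (4 / Real.sqrt Real.pi)
  refine h4.congr_deriv ?_
  have hsq : Real.sqrt (t - τ) ^ 2 = t - τ := Real.sq_sqrt hu.le
  have hm2 : (b / Real.sqrt (t - τ)) ^ 2 = b ^ 2 / (t - τ) := by rw [div_pow, hsq]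
  rw [hm2, neg_div]
  set v := Real.sqrt (t - τ) with hvd
  rw [← hsq]
  field_simp
  ring

lemma phi_eq {b t : ℝ} (hb : 0 < b) (ht : 0 < t) :
    (∫ τ in (0:ℝ)..t, 2 * b ^ 3 / (Real.sqrt Real.pi * Real.sqrt (t - τ) ^ 5) *
        Real.exp (-b ^ 2 / (t - τ)))
      = 1 - 4 / Real.sqrt Real.pi * myG (b / Real.sqrt t) := by
  have hπ : 0 < Real.sqrt Real.pi := Real.sqrt_pos.mpr Real.pi_pos
  set f : ℝ → ℝ := fun τ => 2 * b ^ 3 / (Real.sqrt Real.pi * Real.sqrt (t - τ) ^ 5) *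
      Real.exp (-b ^ 2 / (t - τ)) with hfd
  set F : ℝ → ℝ := fun s => 4 / Real.sqrt Real.pi * myG (b / Real.sqrt (t - s)) with hFd
  have hint := phi_integrable hb ht
  have hne : (𝓝[Ioo 0 t] t).NeBot := right_nhdsWithin_Ioo_neBot ht
  have e1 : Tendsto (fun s => ∫ τ in (0:ℝ)..s, f τ) (𝓝[Ioo 0 t] t)
      (𝓝 (∫ τ in (0:ℝ)..t, f τ)) := by
    have hcont := intervalIntegral.continuousOn_primitive_interval'
      (μ := volume) (f := f) (b₁ := 0) (b₂ := t) (a := 0) hint left_mem_uIcc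
    have h := (hcont t (by rw [uIcc_of_le ht.le]; exact right_mem_Icc.mpr ht.le)).tendsto
    exact h.mono_left (nhdsWithin_mono t (by rw [uIcc_of_le ht.le]; exact Ioo_subset_Icc_self))
  have hm : Tendsto (fun s => b / Real.sqrt (t - s)) (𝓝[Ioo 0 t] t) atTop := by
    have hs : Tendsto (fun s => Real.sqrt (t - s)) (𝓝[Ioo 0 t] t) (𝓝[>] 0) := by
      rw [tendsto_nhdsWithin_iff]
      constructor
      · have h : Tendsto (fun s : ℝ => Real.sqrt (t - s)) (𝓝 t) (𝓝 (Real.sqrt (t - t))) :=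
          ((continuous_const.sub continuous_id).sqrt).tendsto t
        rw [sub_self, Real.sqrt_zero] at h
        exact h.mono_left nhdsWithin_le_nhds
      · filter_upwards [self_mem_nhdsWithin] with s hs
        exact Real.sqrt_pos.mpr (by linarith [hs.2])
    have h := (hs.inv_tendsto_nhdsGT_zero).const_mul_atTop hb
    refine h.congr fun s => ?_
    simp [div_eq_mul_inv]
  have e2 : Tendsto F (𝓝[Ioo 0 t] t) (𝓝 1) := by
    have hval : 4 / Real.sqrt Real.pi * (Real.sqrt Real.pi / 4) = 1 := by field_simp
    rw [hFd, ← hval]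
    exact (myG_tendsto.comp hm).const_mul _
  have e2' : Tendsto (fun s => ∫ τ in (0:ℝ)..s, f τ) (𝓝[Ioo 0 t] t) (𝓝 (1 - F 0)) := by
    have h := e2.sub_const (F 0)
    apply h.congr'
    filter_upwards [self_mem_nhdsWithin] with s hs
    have hsub : uIcc 0 s ⊆ uIcc (0:ℝ) t := by
      rw [uIcc_of_le hs.1.le, uIcc_of_le ht.le]
      exact Icc_subset_Icc le_rfl hs.2.le
    refine (intervalIntegral.integral_eq_sub_of_hasDerivAt (fun τ hτ => ?_)
      (hint.mono_set hsub)).symm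
    rw [uIcc_of_le hs.1.le] at hτ
    exact phi_hasDerivAt (by linarith [hτ.2, hs.2])
  have key := tendsto_nhds_unique e1 e2'
  rw [key, hFd]
  norm_num

/-- For `κ, r, t > 0`, the function
`φ_{κ,r}(t) := ∫_0^t (κ^{3/2} r³/(4√π (t−τ)^{5/2})) e^{−κr²/(4(t−τ))} dτ`
satisfies `|φ_{κ,r}(t) − 1| ≤ κ^{3/2} r³ / (6√π t^{3/2})`. -/
theorem stmt10 (κ r t : ℝ) (hκ : 0 < κ) (hr : 0 < r) (ht : 0 < t) :
    |(∫ τ in (0 : ℝ)..t,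
        κ ^ ((3 : ℝ) / 2) * r ^ 3 / (4 * Real.sqrt Real.pi * (t - τ) ^ ((5 : ℝ) / 2)) *
          Real.exp (-κ * r ^ 2 / (4 * (t - τ)))) - 1|
      ≤ κ ^ ((3 : ℝ) / 2) * r ^ 3 / (6 * Real.sqrt Real.pi * t ^ ((3 : ℝ) / 2)) := by
  have hπ : 0 < Real.sqrt Real.pi := Real.sqrt_pos.mpr Real.pi_pos
  have hκs : 0 < Real.sqrt κ := Real.sqrt_pos.mpr hκ
  set b : ℝ := Real.sqrt κ * r / 2 with hbdef
  have hb : 0 < b := by positivity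
  have hκ32 : κ ^ ((3:ℝ)/2) = Real.sqrt κ ^ 3 := by
    rw [Real.sqrt_eq_rpow, ← Real.rpow_natCast (κ ^ ((1:ℝ)/2)) 3, ← Real.rpow_mul hκ.le]
    norm_num
  have hb3 : κ ^ ((3:ℝ)/2) * r ^ 3 = 8 * b ^ 3 := by
    rw [hκ32, hbdef]; ring
  have hb2 : b ^ 2 = κ * r ^ 2 / 4 := by
    rw [hbdef, div_pow, mul_pow, Real.sq_sqrt hκ.le]; norm_num
  have ht32 : t ^ ((3:ℝ)/2) = Real.sqrt t ^ 3 := by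
    rw [Real.sqrt_eq_rpow, ← Real.rpow_natCast (t ^ ((1:ℝ)/2)) 3, ← Real.rpow_mul ht.le]
    norm_num
  have hst : 0 < Real.sqrt t := Real.sqrt_pos.mpr ht
  have hieq : ∀ τ ∈ uIcc (0:ℝ) t,
      κ ^ ((3 : ℝ) / 2) * r ^ 3 / (4 * Real.sqrt Real.pi * (t - τ) ^ ((5 : ℝ) / 2)) *
          Real.exp (-κ * r ^ 2 / (4 * (t - τ)))
        = 2 * b ^ 3 / (Real.sqrt Real.pi * Real.sqrt (t - τ) ^ 5) *
          Real.exp (-b ^ 2 / (t - τ)) := by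
    intro τ hτ
    rw [uIcc_of_le ht.le] at hτ
    have hu : 0 ≤ t - τ := by linarith [hτ.2]
    have h52 : (t - τ) ^ ((5:ℝ)/2) = Real.sqrt (t - τ) ^ 5 := by
      rw [Real.sqrt_eq_rpow, ← Real.rpow_natCast ((t - τ) ^ ((1:ℝ)/2)) 5, ← Real.rpow_mul hu]
      norm_num
    have hexp : -κ * r ^ 2 / (4 * (t - τ)) = -b ^ 2 / (t - τ) := by
      rw [hb2, neg_mul, neg_div, neg_div, div_div]
    rw [h52, hexp, hb3]
    have h4 : (4:ℝ) * Real.sqrt Real.pi * Real.sqrt (t - τ) ^ 5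
        = 4 * (Real.sqrt Real.pi * Real.sqrt (t - τ) ^ 5) := by ring
    rw [h4, ← div_div]
    congr 1
    ring
  rw [intervalIntegral.integral_congr hieq, phi_eq hb ht]
  have hGnn : 0 ≤ myG (b / Real.sqrt t) := myG_nonneg (by positivity)
  have hXnn : 0 ≤ 4 / Real.sqrt Real.pi * myG (b / Real.sqrt t) :=
    mul_nonneg (by positivity) hGnn
  rw [show (1 : ℝ) - 4 / Real.sqrt Real.pi * myG (b / Real.sqrt t) - 1
      = -(4 / Real.sqrt Real.pi * myG (b / Real.sqrt t)) by ring, abs_neg,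
    abs_of_nonneg hXnn]
  have hle := myG_le (x := b / Real.sqrt t) (by positivity)
  calc 4 / Real.sqrt Real.pi * myG (b / Real.sqrt t)
      ≤ 4 / Real.sqrt Real.pi * ((b / Real.sqrt t) ^ 3 / 3) :=
        mul_le_mul_of_nonneg_left hle (by positivity)
    _ = κ ^ ((3:ℝ)/2) * r ^ 3 / (6 * Real.sqrt Real.pi * t ^ ((3:ℝ)/2)) := by
        rw [hb3, ht32]
        field_simp
        ring
end

section
/- There exists a constant C > 0 (one may take C = 7/(6√π)) such that for every t > 0, every r with 0 < r ≤ √t, and every continuously differentiable function u : [0,t] → ℝ with u(0) = 0, one has | ∫_0^t ( r³ / (4√π · (t−τ)^{5/2}) ) · e^{−r²/(4(t−τ))} · u(τ) dτ − u(t) | ≤ C · r · ( ∫_0^t u'(τ)² dτ )^{1/2}. -/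
open Real MeasureTheory Set Filter Topology intervalIntegral

noncomputable def Hfun : ℝ → ℝ := fun b =>
  1 + (2 / Real.sqrt π) * (b * Real.exp (-b ^ 2) - ∫ m in (0:ℝ)..b, Real.exp (-m ^ 2))

lemma gauss_cont : Continuous fun m : ℝ => Real.exp (-m ^ 2) :=
  (continuous_pow 2).neg.rexp

lemma Hfun_hasDerivAt (b : ℝ) :
    HasDerivAt Hfun (-(4 / Real.sqrt π * (b ^ 2 * Real.exp (-b ^ 2)))) b := by
  have h1 : HasDerivAt (fun x : ℝ => x * Real.exp (-x ^ 2))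
      (Real.exp (-b ^ 2) + b * (Real.exp (-b ^ 2) * -(2 * b))) b := by
    have he : HasDerivAt (fun x : ℝ => Real.exp (-x ^ 2))
        (Real.exp (-b ^ 2) * -(2 * b)) b := by
      have := ((hasDerivAt_pow 2 b).neg).exp
      simpa using this
    exact ((hasDerivAt_id' b).mul he).congr_deriv (by ring)
  have h2 : HasDerivAt (fun x : ℝ => ∫ m in (0:ℝ)..x, Real.exp (-m ^ 2))
      (Real.exp (-b ^ 2)) b :=
    intervalIntegral.integral_hasDerivAt_right (gauss_cont.intervalIntegrable _ _)
      (gauss_cont.stronglyMeasurableAtFilter _ _) gauss_cont.continuousAt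
  have h3 := ((h1.sub h2).const_mul (2 / Real.sqrt π)).const_add 1
  exact h3.congr_deriv (by ring)

lemma sqrt_pi_pos : 0 < Real.sqrt π := Real.sqrt_pos.2 Real.pi_pos

lemma gauss_int_le {b : ℝ} (hb : 0 ≤ b) :
    ∫ m in (0:ℝ)..b, Real.exp (-m ^ 2) ≤ Real.sqrt π / 2 := by
  have h1 : ∫ m in (0:ℝ)..b, Real.exp (-m ^ 2)
      = ∫ m in Ioc (0:ℝ) b, Real.exp (-m ^ 2) := intervalIntegral.integral_of_le hb
  have hint : IntegrableOn (fun m : ℝ => Real.exp (-m ^ 2)) (Ioi 0) := by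
    have := (integrable_exp_neg_mul_sq (b := 1) one_pos).integrableOn (s := Ioi (0:ℝ))
    simpa using this
  have h2 : ∫ m in Ioc (0:ℝ) b, Real.exp (-m ^ 2)
      ≤ ∫ m in Ioi (0:ℝ), Real.exp (-m ^ 2) := by
    apply setIntegral_mono_set hint
    · exact Eventually.of_forall fun x => (Real.exp_pos _).le
    · exact HasSubset.Subset.eventuallyLE Ioc_subset_Ioi_self
  have h3 : ∫ m in Ioi (0:ℝ), Real.exp (-m ^ 2) = Real.sqrt π / 2 := by
    have := integral_gaussian_Ioi 1
    simpa using this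
  rw [h1, ← h3]; exact h2

lemma Hfun_zero : Hfun 0 = 1 := by simp [Hfun]

lemma Hfun_le_one {b : ℝ} (hb : 0 ≤ b) : Hfun b ≤ 1 := by
  have key : b * Real.exp (-b ^ 2) ≤ ∫ m in (0:ℝ)..b, Real.exp (-m ^ 2) := by
    have : ∫ m in (0:ℝ)..b, Real.exp (-b ^ 2) ≤ ∫ m in (0:ℝ)..b, Real.exp (-m ^ 2) := by
      apply intervalIntegral.integral_mono_on hb
        (intervalIntegrable_const) (gauss_cont.intervalIntegrable _ _)
      intro x hx
      apply Real.exp_le_exp.2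
      simp only [neg_le_neg_iff]
      exact pow_le_pow_left₀ hx.1 hx.2 2
    simpa using this
  have h2 : (2 / Real.sqrt π) * (b * Real.exp (-b ^ 2)
      - ∫ m in (0:ℝ)..b, Real.exp (-m ^ 2)) ≤ 0 := by
    apply mul_nonpos_of_nonneg_of_nonpos
    · positivity
    · linarith
  simp only [Hfun]; linarith

lemma Hfun_nonneg {b : ℝ} (hb : 0 ≤ b) : 0 ≤ Hfun b := by
  have h1 : (0:ℝ) ≤ b * Real.exp (-b ^ 2) := by positivity
  have h2 := gauss_int_le hb
  have h3 : (2 / Real.sqrt π) * (b * Real.exp (-b ^ 2)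
      - ∫ m in (0:ℝ)..b, Real.exp (-m ^ 2)) ≥ (2 / Real.sqrt π) * (0 - Real.sqrt π / 2) := by
    apply mul_le_mul_of_nonneg_left (by linarith) (by positivity)
  have hπ := sqrt_pi_pos
  have : (2 / Real.sqrt π) * (0 - Real.sqrt π / 2) = -1 := by
    field_simp; ring
  simp only [Hfun]; rw [this] at h3; linarith

lemma one_sub_Hfun_le {b : ℝ} (hb : 0 ≤ b) :
    1 - Hfun b ≤ 4 / (3 * Real.sqrt π) * b ^ 3 := by
  have hπ := sqrt_pi_pos
  -- ∫_0^b exp(-m²) ≤ b exp(-b²) + (2/3) b³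
  have key : ∫ m in (0:ℝ)..b, Real.exp (-m ^ 2)
      ≤ b * Real.exp (-b ^ 2) + 2 / 3 * b ^ 3 := by
    have hpt : ∀ m ∈ Icc (0:ℝ) b, Real.exp (-m ^ 2)
        ≤ Real.exp (-b ^ 2) + (b ^ 2 - m ^ 2) := by
      intro m hm
      have h1 : Real.exp (-m ^ 2) * (1 - Real.exp (-(b ^ 2 - m ^ 2))) ≤ b ^ 2 - m ^ 2 := by
        have hle : 1 - Real.exp (-(b ^ 2 - m ^ 2)) ≤ b ^ 2 - m ^ 2 := by
          have := Real.add_one_le_exp (-(b ^ 2 - m ^ 2))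
          linarith
        have hge : (0:ℝ) ≤ 1 - Real.exp (-(b ^ 2 - m ^ 2)) := by
          have hb2 : -(b ^ 2 - m ^ 2) ≤ 0 := by
            have := pow_le_pow_left₀ hm.1 hm.2 2
            linarith
          have := Real.exp_le_one_iff.2 hb2
          linarith
        calc Real.exp (-m ^ 2) * (1 - Real.exp (-(b ^ 2 - m ^ 2)))
            ≤ 1 * (1 - Real.exp (-(b ^ 2 - m ^ 2))) := by
              apply mul_le_mul_of_nonneg_right _ hge
              exact Real.exp_le_one_iff.2 (neg_nonpos.mpr (by positivity))
          _ = 1 - Real.exp (-(b ^ 2 - m ^ 2)) := one_mul _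
          _ ≤ b ^ 2 - m ^ 2 := hle
      have h2 : Real.exp (-m ^ 2) * (1 - Real.exp (-(b ^ 2 - m ^ 2)))
          = Real.exp (-m ^ 2) - Real.exp (-b ^ 2) := by
        rw [mul_sub, mul_one, ← Real.exp_add]
        ring_nf
      linarith [h1, h2.symm.le]
    have hmono : ∫ m in (0:ℝ)..b, Real.exp (-m ^ 2)
        ≤ ∫ m in (0:ℝ)..b, (Real.exp (-b ^ 2) + (b ^ 2 - m ^ 2)) := by
      apply intervalIntegral.integral_mono_on hb (gauss_cont.intervalIntegrable _ _)
      · apply Continuous.intervalIntegrable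
        continuity
      · exact hpt
    have hcomp : ∫ m in (0:ℝ)..b, (Real.exp (-b ^ 2) + (b ^ 2 - m ^ 2))
        = b * Real.exp (-b ^ 2) + 2 / 3 * b ^ 3 := by
      have : ∫ m in (0:ℝ)..b, (Real.exp (-b ^ 2) + (b ^ 2 - m ^ 2))
          = ∫ m in (0:ℝ)..b, (Real.exp (-b ^ 2) + b ^ 2 - m ^ 2) := by
        congr 1; ext m; ring
      rw [this, intervalIntegral.integral_sub (by apply Continuous.intervalIntegrable; continuity)
        (by apply Continuous.intervalIntegrable; continuity)]
      rw [intervalIntegral.integral_const, integral_pow]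
      simp; ring
    linarith
  have expand : 1 - Hfun b = (2 / Real.sqrt π) *
      ((∫ m in (0:ℝ)..b, Real.exp (-m ^ 2)) - b * Real.exp (-b ^ 2)) := by
    simp only [Hfun]; ring
  rw [expand]
  have : (∫ m in (0:ℝ)..b, Real.exp (-m ^ 2)) - b * Real.exp (-b ^ 2) ≤ 2 / 3 * b ^ 3 := by
    linarith
  calc (2 / Real.sqrt π) * ((∫ m in (0:ℝ)..b, Real.exp (-m ^ 2)) - b * Real.exp (-b ^ 2))
      ≤ (2 / Real.sqrt π) * (2 / 3 * b ^ 3) := by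
        apply mul_le_mul_of_nonneg_left this (by positivity)
    _ = 4 / (3 * Real.sqrt π) * b ^ 3 := by field_simp; ring

lemma Hfun_tendsto : Tendsto Hfun atTop (𝓝 0) := by
  have hπ := sqrt_pi_pos
  have h1 : Tendsto (fun b : ℝ => b * Real.exp (-b ^ 2)) atTop (𝓝 0) := by
    have base := tendsto_rpow_mul_exp_neg_mul_atTop_nhds_zero (1/2) 1 one_pos
    have comp := base.comp (tendsto_pow_atTop (n := 2) (by norm_num) :
      Tendsto (fun b : ℝ => b ^ 2) atTop atTop)
    apply comp.congr'
    filter_upwards [eventually_ge_atTop (0:ℝ)] with b hb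
    simp only [Function.comp_apply]
    have hbb : ((b:ℝ) ^ 2) ^ ((1:ℝ)/2) = b := by
      rw [← Real.rpow_natCast b 2, ← Real.rpow_mul hb]; norm_num
    rw [hbb]; norm_num
  have hint : IntegrableOn (fun m : ℝ => Real.exp (-m ^ 2)) (Ioi 0) := by
    have := (integrable_exp_neg_mul_sq (b := 1) one_pos).integrableOn (s := Ioi (0:ℝ))
    simpa using this
  have h2 : Tendsto (fun b : ℝ => ∫ m in (0:ℝ)..b, Real.exp (-m ^ 2)) atTop
      (𝓝 (Real.sqrt π / 2)) := by
    have h3 : ∫ m in Ioi (0:ℝ), Real.exp (-m ^ 2) = Real.sqrt π / 2 := by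
      have := integral_gaussian_Ioi 1
      simpa using this
    have := MeasureTheory.intervalIntegral_tendsto_integral_Ioi 0 hint tendsto_id
    rw [h3] at this
    exact this
  have h4 := ((h1.sub h2).const_mul (2 / Real.sqrt π)).const_add 1
  have : (1:ℝ) + 2 / Real.sqrt π * (0 - Real.sqrt π / 2) = 0 := by
    field_simp; ring
  rw [this] at h4
  exact h4

lemma Hfun_continuous : Continuous Hfun := by
  apply Continuous.add continuous_const
  apply Continuous.mul continuous_const
  apply Continuous.sub
  · exact continuous_id.mul gauss_cont
  · exact intervalIntegral.continuous_primitive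
      (fun a b => gauss_cont.intervalIntegrable a b) 0

lemma memL2_of_continuousOn {a b : ℝ} (hab : a ≤ b) {f : ℝ → ℝ}
    (hf : ContinuousOn f (Icc a b)) :
    MemLp f (ENNReal.ofReal 2) (volume.restrict (Ioc a b)) := by
  haveI : IsFiniteMeasure (volume.restrict (Ioc a b)) :=
    ⟨by rw [Measure.restrict_apply_univ]; exact measure_Ioc_lt_top⟩
  obtain ⟨C, hC⟩ := (isCompact_Icc (a := a) (b := b)).exists_bound_of_continuousOn hf
  apply MemLp.of_bound
    ((hf.mono Ioc_subset_Icc_self).aestronglyMeasurable measurableSet_Ioc) C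
  filter_upwards [ae_restrict_mem measurableSet_Ioc] with x hx
  exact hC x (Ioc_subset_Icc_self hx)

lemma cauchy_schwarz_interval {a b : ℝ} (hab : a ≤ b) {f g : ℝ → ℝ}
    (hf : ContinuousOn f (Icc a b)) (hg : ContinuousOn g (Icc a b)) :
    |∫ x in a..b, f x * g x| ≤
      Real.sqrt (∫ x in a..b, f x ^ 2) * Real.sqrt (∫ x in a..b, g x ^ 2) := by
  have h1 : |∫ x in a..b, f x * g x| ≤ ∫ x in a..b, |f x * g x| :=
    intervalIntegral.abs_integral_le_integral_abs hab
  have h2 : ∫ x in a..b, |f x * g x| = ∫ x in Ioc a b, ‖f x‖ * ‖g x‖ := by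
    rw [intervalIntegral.integral_of_le hab]
    congr 1; ext x; rw [abs_mul]; rfl
  have hpq : Real.HolderConjugate 2 2 := Real.holderConjugate_iff.mpr ⟨by norm_num, by norm_num⟩
  have h3 := MeasureTheory.integral_mul_norm_le_Lp_mul_Lq (μ := volume.restrict (Ioc a b))
    hpq (memL2_of_continuousOn hab hf) (memL2_of_continuousOn hab hg)
  have hf2 : ∫ x in Ioc a b, ‖f x‖ ^ (2:ℝ) = ∫ x in a..b, f x ^ 2 := by
    rw [intervalIntegral.integral_of_le hab]
    congr 1; ext x
    rw [show (2:ℝ) = ((2:ℕ):ℝ) by norm_num, Real.rpow_natCast, Real.norm_eq_abs, sq_abs]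
  have hg2 : ∫ x in Ioc a b, ‖g x‖ ^ (2:ℝ) = ∫ x in a..b, g x ^ 2 := by
    rw [intervalIntegral.integral_of_le hab]
    congr 1; ext x
    rw [show (2:ℝ) = ((2:ℕ):ℝ) by norm_num, Real.rpow_natCast, Real.norm_eq_abs, sq_abs]
  rw [hf2, hg2] at h3
  calc |∫ x in a..b, f x * g x| ≤ ∫ x in a..b, |f x * g x| := h1
    _ = ∫ x in Ioc a b, ‖f x‖ * ‖g x‖ := h2
    _ ≤ (∫ x in a..b, f x ^ 2) ^ (1/(2:ℝ)) * (∫ x in a..b, g x ^ 2) ^ (1/(2:ℝ)) := h3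
    _ = Real.sqrt (∫ x in a..b, f x ^ 2) * Real.sqrt (∫ x in a..b, g x ^ 2) := by
        rw [Real.sqrt_eq_rpow, Real.sqrt_eq_rpow]

set_option maxHeartbeats 1600000 in
/-- There is a constant `C > 0` (one may take `C = 7/(6√π)`) such that for every
`t > 0`, every `0 < r ≤ √t`, and every continuously differentiable `u : [0,t] → ℝ`
with `u(0) = 0`,
`|∫_0^t (r³/(4√π (t−τ)^{5/2})) e^{−r²/(4(t−τ))} u(τ) dτ − u(t)|
   ≤ C · r · (∫_0^t u'(τ)² dτ)^{1/2}`. -/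
theorem stmt16 :
    ∃ C > 0, ∀ (t : ℝ), 0 < t → ∀ (r : ℝ), 0 < r → r ≤ Real.sqrt t →
      ∀ u : ℝ → ℝ, ContDiffOn ℝ 1 u (Set.Icc 0 t) → u 0 = 0 →
        |(∫ τ in (0 : ℝ)..t,
            r ^ 3 / (4 * Real.sqrt Real.pi * (t - τ) ^ ((5 : ℝ) / 2)) *
              Real.exp (-r ^ 2 / (4 * (t - τ))) * u τ) - u t|
          ≤ C * r *
              Real.sqrt (∫ τ in (0 : ℝ)..t, (derivWithin u (Set.Icc 0 t) τ) ^ 2) := by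
  refine ⟨Real.sqrt 2, Real.sqrt_pos.2 (by norm_num), ?_⟩
  intro t ht r hr hrt u hu hu0
  have hsp : 0 < Real.sqrt π := sqrt_pi_pos
  have hπ : 0 < π := Real.pi_pos
  have hr2t : r ^ 2 ≤ t := by
    have h1 : r ^ 2 ≤ Real.sqrt t ^ 2 := pow_le_pow_left₀ hr.le hrt 2
    rwa [Real.sq_sqrt ht.le] at h1
  set u' : ℝ → ℝ := derivWithin u (Set.Icc 0 t) with hu'def
  set K : ℝ → ℝ := fun τ => r ^ 3 / (4 * Real.sqrt π * (t - τ) ^ ((5:ℝ)/2)) *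
    Real.exp (-r ^ 2 / (4 * (t - τ))) with hKdef
  set bb : ℝ → ℝ := fun τ => r / (2 * Real.sqrt (t - τ)) with hbbdef
  set F : ℝ → ℝ := fun τ => Hfun (bb τ) with hFdef
  set B : ℝ := ∫ τ in (0:ℝ)..t, u' τ ^ 2 with hBdef
  -- basic continuity of u and u'
  have hucont : ContinuousOn u (Icc 0 t) := hu.continuousOn
  have hu'cont : ContinuousOn u' (Icc 0 t) :=
    hu.continuousOn_derivWithin (uniqueDiffOn_Icc ht) le_rfl
  have huderiv : ∀ x ∈ Ioo 0 t, HasDerivAt u (u' x) x := by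
    intro x hx
    have hd := (hu.differentiableOn one_ne_zero) x (Ioo_subset_Icc_self hx)
    exact hd.hasDerivWithinAt.hasDerivAt (Icc_mem_nhds hx.1 hx.2)
  -- bb facts
  have hbbnn : ∀ τ : ℝ, 0 ≤ bb τ := fun τ => div_nonneg hr.le (by positivity)
  have hFle1 : ∀ τ : ℝ, F τ ≤ 1 := fun τ => Hfun_le_one (hbbnn τ)
  have hFnn : ∀ τ : ℝ, 0 ≤ F τ := fun τ => Hfun_nonneg (hbbnn τ)
  -- F derivative
  have hFderiv : ∀ τ : ℝ, τ < t → HasDerivAt F (-K τ) τ := by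
    intro τ hτ
    have hs : 0 < t - τ := sub_pos.2 hτ
    have hsq : 0 < Real.sqrt (t - τ) := Real.sqrt_pos.2 hs
    have h1 : HasDerivAt (fun x : ℝ => t - x) (-1) τ := (hasDerivAt_id τ).const_sub t
    have h2 : HasDerivAt (fun x : ℝ => Real.sqrt (t - x))
        (1 / (2 * Real.sqrt (t - τ)) * -1) τ :=
      (Real.hasDerivAt_sqrt hs.ne').comp τ h1
    have h3 : HasDerivAt (fun x : ℝ => 2 * Real.sqrt (t - x))
        (2 * (1 / (2 * Real.sqrt (t - τ)) * -1)) τ := h2.const_mul 2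
    have h4 : HasDerivAt bb
        ((0 * (2 * Real.sqrt (t - τ)) - r * (2 * (1 / (2 * Real.sqrt (t - τ)) * -1))) /
          (2 * Real.sqrt (t - τ)) ^ 2) τ :=
      (hasDerivAt_const τ r).div h3 (by positivity)
    have h5 := (Hfun_hasDerivAt (bb τ)).comp τ h4
    refine h5.congr_deriv ?_
    symm
    have hb2 : bb τ ^ 2 = r ^ 2 / (4 * (t - τ)) := by
      rw [hbbdef]
      simp only
      rw [div_pow, mul_pow, Real.sq_sqrt hs.le]
      norm_num
    have hexp : Real.exp (-(bb τ ^ 2)) = Real.exp (-r ^ 2 / (4 * (t - τ))) := by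
      rw [hb2]; ring_nf
    have hrpow : (t - τ) ^ ((5:ℝ)/2) = (t - τ) ^ 2 * Real.sqrt (t - τ) := by
      rw [Real.sqrt_eq_rpow, ← Real.rpow_natCast (t - τ) 2, ← Real.rpow_add hs]
      norm_num
    rw [hKdef]
    simp only
    rw [hrpow, ← hexp, hb2]
    have hq2 : Real.sqrt (t - τ) ^ 2 = t - τ := Real.sq_sqrt hs.le
    set q := Real.sqrt (t - τ) with hqdef
    rw [← hq2]
    field_simp
    ring
  -- continuity of bb and F on Ico 0 t
  have hbbcont : ContinuousOn bb (Ico 0 t) := by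
    apply ContinuousOn.div continuousOn_const
    · exact (continuous_const.mul (continuous_const.sub continuous_id).sqrt).continuousOn
    · intro x hx
      have : 0 < t - x := sub_pos.2 hx.2
      positivity
  have hFcont : ContinuousOn F (Ico 0 t) := Hfun_continuous.comp_continuousOn hbbcont
  -- continuity of K on Icc 0 t
  have hKt : K t = 0 := by
    rw [hKdef]
    simp only
    rw [sub_self, Real.zero_rpow (by norm_num), mul_zero, div_zero, zero_mul]
  have hKcont : ContinuousOn K (Icc 0 t) := by
    intro τ hτ
    rcases lt_or_eq_of_le hτ.2 with hlt | heq
    · apply ContinuousAt.continuousWithinAt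
      have hs : 0 < t - τ := sub_pos.2 hlt
      have hc1 : ContinuousAt (fun x : ℝ => (t - x) ^ ((5:ℝ)/2)) τ :=
        (Real.continuousAt_rpow_const (t - τ) ((5:ℝ)/2) (Or.inl hs.ne')).comp
          ((continuous_const.sub continuous_id).continuousAt)
      have hne : 4 * Real.sqrt π * (t - τ) ^ ((5:ℝ)/2) ≠ 0 := by
        have := Real.rpow_pos_of_pos hs ((5:ℝ)/2)
        positivity
      have hc2 : ContinuousAt (fun x : ℝ =>
          r ^ 3 / (4 * Real.sqrt π * (t - x) ^ ((5:ℝ)/2))) τ :=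
        ContinuousAt.div continuousAt_const (continuousAt_const.mul hc1) hne
      have hne2 : 4 * (t - τ) ≠ 0 := by positivity
      have hc3 : ContinuousAt (fun x : ℝ => Real.exp (-r ^ 2 / (4 * (t - x)))) τ :=
        (Real.continuous_exp.continuousAt).comp
          (ContinuousAt.div continuousAt_const
            (continuousAt_const.mul ((continuous_const.sub continuous_id).continuousAt)) hne2)
      exact hc2.mul hc3
    · subst heq
      rw [← continuousWithinAt_diff_self]
      unfold ContinuousWithinAt
      rw [hKt]
      have hmap : Tendsto (fun x : ℝ => τ - x) (𝓝[Icc 0 τ \ {τ}] τ) (𝓝[>] 0) := by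
        rw [tendsto_nhdsWithin_iff]
        constructor
        · have h0 : Tendsto (fun x : ℝ => τ - x) (𝓝 τ) (𝓝 (τ - τ)) :=
            (continuous_const.sub continuous_id).tendsto τ
          rw [sub_self] at h0
          exact h0.mono_left nhdsWithin_le_nhds
        · filter_upwards [self_mem_nhdsWithin] with x hx
          have hxt : x < τ := lt_of_le_of_ne hx.1.2 (by simpa using hx.2)
          exact mem_Ioi.2 (sub_pos.2 hxt)
      have hg : Tendsto (fun s : ℝ => r ^ 3 / (4 * Real.sqrt π * s ^ ((5:ℝ)/2)) *
          Real.exp (-r ^ 2 / (4 * s))) (𝓝[>] (0:ℝ)) (𝓝 0) := by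
        have hbase := tendsto_rpow_mul_exp_neg_mul_atTop_nhds_zero ((5:ℝ)/2) (r^2/4)
          (by positivity)
        have hinv : Tendsto (fun s : ℝ => s⁻¹) (𝓝[>] (0:ℝ)) atTop := tendsto_inv_nhdsGT_zero
        have hcomp := (hbase.comp hinv).const_mul (r^3/(4*Real.sqrt π))
        rw [mul_zero] at hcomp
        apply hcomp.congr'
        filter_upwards [self_mem_nhdsWithin] with s hs
        have hs0 : (0:ℝ) < s := hs
        have h5 : (0:ℝ) < s ^ ((5:ℝ)/2) := Real.rpow_pos_of_pos hs0 _
        simp only [Function.comp_apply]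
        rw [Real.inv_rpow hs0.le]
        rw [show -(r^2/4) * s⁻¹ = -r^2/(4*s) by field_simp]
        field_simp
      have := hg.comp hmap
      apply this.congr
      intro x
      simp only [Function.comp_apply]
      rfl
  -- interval integrability on [0, t]
  have hKuint : IntervalIntegrable (fun τ => K τ * u τ) volume 0 t :=
    (hKcont.mul hucont).intervalIntegrable_of_Icc ht.le
  have hu'int : IntervalIntegrable u' volume 0 t :=
    hu'cont.intervalIntegrable_of_Icc ht.le
  have hu'sqint : IntervalIntegrable (fun τ => u' τ ^ 2) volume 0 t :=
    (hu'cont.pow 2).intervalIntegrable_of_Icc ht.le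
  -- the key identity, for c < t
  have hId : ∀ c : ℝ, 0 ≤ c → c < t →
      (∫ τ in (0:ℝ)..c, K τ * u τ) - u c
        = (∫ τ in (0:ℝ)..c, (F τ - 1) * u' τ) - F c * u c := by
    intro c hc0 hct
    have hsub1 : Icc (0:ℝ) c ⊆ Ico 0 t := fun x hx => ⟨hx.1, lt_of_le_of_lt hx.2 hct⟩
    have hsub2 : Icc (0:ℝ) c ⊆ Icc 0 t := fun x hx => ⟨hx.1, le_trans hx.2 hct.le⟩
    have hFc : ContinuousOn F (Icc 0 c) := hFcont.mono hsub1
    have huc : ContinuousOn u (Icc 0 c) := hucont.mono hsub2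
    have hu'c : ContinuousOn u' (Icc 0 c) := hu'cont.mono hsub2
    have hKc : ContinuousOn K (Icc 0 c) := hKcont.mono hsub2
    have iKu : IntervalIntegrable (fun τ => K τ * u τ) volume 0 c :=
      (hKc.mul huc).intervalIntegrable_of_Icc hc0
    have iFu' : IntervalIntegrable (fun τ => F τ * u' τ) volume 0 c :=
      (hFc.mul hu'c).intervalIntegrable_of_Icc hc0
    have iu' : IntervalIntegrable u' volume 0 c := hu'c.intervalIntegrable_of_Icc hc0
    have inKu : IntervalIntegrable (fun τ => -K τ * u τ) volume 0 c := by
      have := iKu.neg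
      simpa [neg_mul, Pi.neg_def] using this
    have hint1 : IntervalIntegrable (fun τ => -K τ * u τ + F τ * u' τ) volume 0 c :=
      inKu.add iFu'
    have hFTC1 : ∫ τ in (0:ℝ)..c, (-K τ * u τ + F τ * u' τ) = F c * u c - F 0 * u 0 := by
      apply integral_eq_sub_of_hasDerivAt_of_le hc0 (hFc.mul huc) _ hint1
      intro x hx
      exact (hFderiv x (hx.2.trans hct)).mul (huderiv x ⟨hx.1, hx.2.trans hct⟩)
    have hFTC2 : ∫ τ in (0:ℝ)..c, u' τ = u c - u 0 := by
      apply integral_eq_sub_of_hasDerivAt_of_le hc0 huc _ iu'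
      intro x hx
      exact huderiv x ⟨hx.1, hx.2.trans hct⟩
    have e1 : ∫ τ in (0:ℝ)..c, (-K τ * u τ + F τ * u' τ)
        = -(∫ τ in (0:ℝ)..c, K τ * u τ) + ∫ τ in (0:ℝ)..c, F τ * u' τ := by
      rw [integral_add inKu iFu']
      congr 1
      rw [← intervalIntegral.integral_neg]
      congr 1
      funext τ
      ring
    have e2 : ∫ τ in (0:ℝ)..c, (F τ - 1) * u' τ
        = (∫ τ in (0:ℝ)..c, F τ * u' τ) - ∫ τ in (0:ℝ)..c, u' τ := by
      rw [← integral_sub iFu' iu']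
      congr 1
      funext τ
      ring
    rw [hu0] at hFTC1 hFTC2
    rw [e2]
    linarith [hFTC1, hFTC2, e1]
  -- the L² bound on F - 1
  have hpt2 : ∀ τ : ℝ, τ < t → (F τ - 1)^2 ≤ (r^6/(36*π)) / (t - τ)^3 := by
    intro τ hτ
    have hs : 0 < t - τ := sub_pos.2 hτ
    have hsq : 0 < Real.sqrt (t - τ) := Real.sqrt_pos.2 hs
    have h1 : 1 - F τ ≤ 4/(3*Real.sqrt π) * bb τ ^ 3 := one_sub_Hfun_le (hbbnn τ)
    have h0 : 0 ≤ 1 - F τ := by linarith [hFle1 τ]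
    have hb3 : bb τ ^ 3 = r^3 / (8 * ((t - τ) * Real.sqrt (t - τ))) := by
      rw [hbbdef]
      simp only
      rw [div_pow, mul_pow,
        show Real.sqrt (t-τ) ^ 3 = (t-τ) * Real.sqrt (t-τ) by
          rw [pow_succ, Real.sq_sqrt hs.le]]
      norm_num
    have h2 : (F τ - 1)^2 ≤ (4/(3*Real.sqrt π) * bb τ ^ 3)^2 := by
      have := pow_le_pow_left₀ h0 h1 2
      calc (F τ - 1)^2 = (1 - F τ)^2 := by ring
        _ ≤ (4/(3*Real.sqrt π) * bb τ ^ 3)^2 := this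
    refine h2.trans (le_of_eq ?_)
    rw [hb3]
    have hq2 : Real.sqrt (t - τ) ^ 2 = t - τ := Real.sq_sqrt hs.le
    have hp2 : Real.sqrt π ^ 2 = π := Real.sq_sqrt hπ.le
    set q := Real.sqrt (t - τ) with hqdef
    rw [← hq2]
    field_simp
    linear_combination (-576:ℝ) * hp2
  have hanti : ∀ e : ℝ, 0 ≤ e → e ≤ t - r^2 →
      ∫ τ in (0:ℝ)..e, (r^6/(36*π)) / (t - τ)^3 ≤ r^2 := by
    intro e he0 het2
    have het : e < t := by nlinarith
    have hFTC : ∫ τ in (0:ℝ)..e, (r^6/(36*π)) / (t - τ)^3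
        = r^6/(36*π)/2 * ((t-e)^2)⁻¹ - r^6/(36*π)/2 * ((t-0)^2)⁻¹ := by
      apply integral_eq_sub_of_hasDerivAt
      · intro x hx
        rw [uIcc_of_le he0] at hx
        have hsx : 0 < t - x := sub_pos.2 (lt_of_le_of_lt hx.2 het)
        have hd1 : HasDerivAt (fun τ : ℝ => (t - τ)^2) (2 * (t - x)^1 * -1) x := by
          exact ((hasDerivAt_id x).const_sub t).pow 2
        have hd2 : HasDerivAt (fun τ : ℝ => ((t - τ)^2)⁻¹)
            (-(2 * (t - x)^1 * -1) / ((t - x)^2)^2) x := hd1.inv (by positivity)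
        have hd3 := hd2.const_mul (r^6/(36*π)/2)
        refine hd3.congr_deriv ?_
        symm
        field_simp
      · apply ContinuousOn.intervalIntegrable
        apply ContinuousOn.div continuousOn_const
        · exact ((continuous_const.sub continuous_id).pow 3).continuousOn
        · intro x hx
          rw [uIcc_of_le he0] at hx
          have hsx : 0 < t - x := sub_pos.2 (lt_of_le_of_lt hx.2 het)
          positivity
    rw [hFTC]
    have hte : r^2 ≤ t - e := by linarith
    have h4 : r^4 ≤ (t-e)^2 := by nlinarith
    have hr4 : (0:ℝ) < r^4 := by positivity
    have hb1 : r^6/(36*π)/2 * ((t-e)^2)⁻¹ ≤ r^6/(36*π)/2 * (r^4)⁻¹ := by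
      apply mul_le_mul_of_nonneg_left _ (by positivity)
      exact inv_anti₀ hr4 h4
    have hb2 : r^6/(36*π)/2 * (r^4)⁻¹ ≤ r^2 := by
      rw [div_div]
      have : r^6/(36*π*2) * (r^4)⁻¹ = r^2 / (72*π) := by
        field_simp
        ring
      rw [this]
      rw [div_le_iff₀ (by positivity)]
      have h72 : (1:ℝ) ≤ 72 * π := by nlinarith [Real.pi_gt_three]
      nlinarith [sq_nonneg r, h72]
    have hb3 : (0:ℝ) ≤ r^6/(36*π)/2 * ((t-0)^2)⁻¹ := by positivity
    linarith
  have hIb : ∀ c : ℝ, 0 ≤ c → c < t →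
      ∫ τ in (0:ℝ)..c, (F τ - 1)^2 ≤ 2 * r^2 := by
    intro c hc0 hct
    have hsub1 : Icc (0:ℝ) c ⊆ Ico 0 t := fun x hx => ⟨hx.1, lt_of_le_of_lt hx.2 hct⟩
    have hFsqc : ContinuousOn (fun τ => (F τ - 1)^2) (Icc 0 c) :=
      (((hFcont.mono hsub1).sub continuousOn_const).pow 2)
    set e : ℝ := min c (t - r^2) with hedef
    have he0 : 0 ≤ e := le_min hc0 (by linarith)
    have hec : e ≤ c := min_le_left _ _
    have het2 : e ≤ t - r^2 := min_le_right _ _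
    have het : e < t := by nlinarith
    have i1 : IntervalIntegrable (fun τ => (F τ - 1)^2) volume 0 e :=
      (hFsqc.mono (Icc_subset_Icc le_rfl hec)).intervalIntegrable_of_Icc he0
    have i2 : IntervalIntegrable (fun τ => (F τ - 1)^2) volume e c := by
      apply ContinuousOn.intervalIntegrable
      rw [uIcc_of_le hec]
      exact hFsqc.mono (Icc_subset_Icc he0 le_rfl)
    have hsplit : ∫ τ in (0:ℝ)..c, (F τ - 1)^2
        = (∫ τ in (0:ℝ)..e, (F τ - 1)^2) + ∫ τ in e..c, (F τ - 1)^2 :=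
      (integral_add_adjacent_intervals i1 i2).symm
    have ia : IntervalIntegrable (fun τ => (r^6/(36*π)) / (t - τ)^3) volume 0 e := by
      apply ContinuousOn.intervalIntegrable
      rw [uIcc_of_le he0]
      apply ContinuousOn.div continuousOn_const
      · exact ((continuous_const.sub continuous_id).pow 3).continuousOn
      · intro x hx
        have hsx : 0 < t - x := sub_pos.2 (lt_of_le_of_lt hx.2 het)
        positivity
    have hbd1 : ∫ τ in (0:ℝ)..e, (F τ - 1)^2
        ≤ ∫ τ in (0:ℝ)..e, (r^6/(36*π)) / (t - τ)^3 := by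
      apply integral_mono_on he0 i1 ia
      intro x hx
      exact hpt2 x (lt_of_le_of_lt hx.2 het)
    have hbd2 : ∫ τ in e..c, (F τ - 1)^2 ≤ c - e := by
      have : ∫ τ in e..c, (F τ - 1)^2 ≤ ∫ τ in e..c, (1:ℝ) := by
        apply integral_mono_on hec i2 intervalIntegrable_const
        intro x hx
        nlinarith [hFnn x, hFle1 x]
      simpa using this
    have hce : c - e ≤ r^2 := by
      rcases le_total c (t - r^2) with h | h
      · rw [hedef, min_eq_left h]; nlinarith [sq_nonneg r]
      · rw [hedef, min_eq_right h]; linarith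
    have := hanti e he0 het2
    linarith
  -- limits as c → t⁻
  have hIoo : Ioo (0:ℝ) t ∈ 𝓝[<] t := Ioo_mem_nhdsLT_of_mem ⟨ht, le_refl t⟩
  have hIcc_mem : Icc (0:ℝ) t ∈ 𝓝[<] t := mem_of_superset hIoo Ioo_subset_Icc_self
  have hle : 𝓝[<] t ≤ 𝓝[Icc (0:ℝ) t] t := nhdsWithin_le_iff.2 hIcc_mem
  have hΦcont : ContinuousOn (fun c => ∫ τ in (0:ℝ)..c, K τ * u τ) (Icc 0 t) := by
    have hint : IntegrableOn (fun τ => K τ * u τ) (uIcc (0:ℝ) t) volume := by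
      rw [uIcc_of_le ht.le]
      exact (hKcont.mul hucont).integrableOn_compact isCompact_Icc
    have := intervalIntegral.continuousOn_primitive_interval hint
    rwa [uIcc_of_le ht.le] at this
  have hΦt : Tendsto (fun c => ∫ τ in (0:ℝ)..c, K τ * u τ) (𝓝[<] t)
      (𝓝 (∫ τ in (0:ℝ)..t, K τ * u τ)) :=
    ((hΦcont t (right_mem_Icc.2 ht.le)).mono_left hle)
  have hut : Tendsto u (𝓝[<] t) (𝓝 (u t)) :=
    (hucont t (right_mem_Icc.2 ht.le)).mono_left hle
  have habs : Tendsto (fun c => |(∫ τ in (0:ℝ)..c, K τ * u τ) - u c|) (𝓝[<] t)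
      (𝓝 (|(∫ τ in (0:ℝ)..t, K τ * u τ) - u t|)) := (hΦt.sub hut).abs
  have hFt0 : Tendsto F (𝓝[<] t) (𝓝 0) := by
    have hw : Tendsto (fun c => 2 * Real.sqrt (t - c)) (𝓝[<] t) (𝓝[>] (0:ℝ)) := by
      rw [tendsto_nhdsWithin_iff]
      constructor
      · have hcont2 : Continuous (fun c : ℝ => 2 * Real.sqrt (t - c)) :=
          continuous_const.mul (continuous_const.sub continuous_id).sqrt
        have h0 := hcont2.tendsto t
        simp only [sub_self, Real.sqrt_zero, mul_zero] at h0
        exact h0.mono_left nhdsWithin_le_nhds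
      · filter_upwards [self_mem_nhdsWithin] with x hx
        have h1 : 0 < t - x := sub_pos.2 hx
        have h2 : 0 < Real.sqrt (t - x) := Real.sqrt_pos.2 h1
        exact mem_Ioi.2 (by positivity)
    have hinv : Tendsto (fun c => (2 * Real.sqrt (t - c))⁻¹) (𝓝[<] t) atTop :=
      tendsto_inv_nhdsGT_zero.comp hw
    have hbbt : Tendsto bb (𝓝[<] t) atTop := by
      have h3 := hinv.const_mul_atTop hr
      apply h3.congr
      intro c
      rw [hbbdef]
      simp only [div_eq_mul_inv]
    exact Hfun_tendsto.comp hbbt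
  have hrhs : Tendsto (fun c => Real.sqrt 2 * r * Real.sqrt B + F c * |u c|) (𝓝[<] t)
      (𝓝 (Real.sqrt 2 * r * Real.sqrt B + 0)) := by
    apply tendsto_const_nhds.add
    have := hFt0.mul hut.abs
    simpa using this
  have hev : ∀ᶠ c in 𝓝[<] t, |(∫ τ in (0:ℝ)..c, K τ * u τ) - u c|
      ≤ Real.sqrt 2 * r * Real.sqrt B + F c * |u c| := by
    filter_upwards [hIoo] with c hc
    have hc0 : (0:ℝ) ≤ c := hc.1.le
    have hct : c < t := hc.2
    have hsub1 : Icc (0:ℝ) c ⊆ Ico 0 t := fun x hx => ⟨hx.1, lt_of_le_of_lt hx.2 hct⟩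
    have hsub2 : Icc (0:ℝ) c ⊆ Icc 0 t := fun x hx => ⟨hx.1, le_trans hx.2 hct.le⟩
    rw [hId c hc0 hct]
    have hCS : |∫ τ in (0:ℝ)..c, (F τ - 1) * u' τ|
        ≤ Real.sqrt (∫ τ in (0:ℝ)..c, (F τ - 1)^2) *
          Real.sqrt (∫ τ in (0:ℝ)..c, u' τ ^ 2) :=
      cauchy_schwarz_interval hc0
        ((hFcont.mono hsub1).sub continuousOn_const) (hu'cont.mono hsub2)
    have h1 : Real.sqrt (∫ τ in (0:ℝ)..c, (F τ - 1)^2) ≤ Real.sqrt (2*r^2) :=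
      Real.sqrt_le_sqrt (hIb c hc0 hct)
    have h2 : Real.sqrt (∫ τ in (0:ℝ)..c, u' τ ^ 2) ≤ Real.sqrt B := by
      apply Real.sqrt_le_sqrt
      rw [hBdef]
      apply integral_mono_interval le_rfl hc0 hct.le _ hu'sqint
      exact ae_of_all _ fun x => sq_nonneg _
    have h3 : Real.sqrt (2*r^2) = Real.sqrt 2 * r := by
      rw [Real.sqrt_mul (by norm_num), Real.sqrt_sq hr.le]
    have hCS2 : |∫ τ in (0:ℝ)..c, (F τ - 1) * u' τ| ≤ Real.sqrt 2 * r * Real.sqrt B := by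
      calc |∫ τ in (0:ℝ)..c, (F τ - 1) * u' τ|
          ≤ Real.sqrt (∫ τ in (0:ℝ)..c, (F τ - 1)^2) *
            Real.sqrt (∫ τ in (0:ℝ)..c, u' τ ^ 2) := hCS
        _ ≤ Real.sqrt (2*r^2) * Real.sqrt B := by
            apply mul_le_mul h1 h2 (Real.sqrt_nonneg _) (Real.sqrt_nonneg _)
        _ = Real.sqrt 2 * r * Real.sqrt B := by rw [h3]
    calc |(∫ τ in (0:ℝ)..c, (F τ - 1) * u' τ) - F c * u c|
        ≤ |∫ τ in (0:ℝ)..c, (F τ - 1) * u' τ| + |F c * u c| := abs_sub _ _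
      _ ≤ Real.sqrt 2 * r * Real.sqrt B + F c * |u c| := by
          apply add_le_add hCS2
          rw [abs_mul, abs_of_nonneg (hFnn c)]
  have final := le_of_tendsto_of_tendsto habs hrhs hev
  rw [add_zero] at final
  simp only [hKdef] at final
  exact final
end

section
/- Counting Lemma: for every R > 0 and every k > 0 there exists a constant C > 0 such that for every d with 0 < d ≤ 1, every finite family of points z_1, …, z_M in ℝ³ contained in a closed ball of radius R and satisfying |z_i − z_j| ≥ d for all i ≠ j, and every index i, the following bounds hold uniformly in i: Σ_{j≠i} |z_i − z_j|^{−k} ≤ C·d^{−3} if k < 3; Σ_{j≠i} |z_i − z_j|^{−k} ≤ C·d^{−3}·(1 + |log d|) if k = 3; and Σ_{j≠i} |z_i − z_j|^{−k} ≤ C·d^{−k} if k > 3. -/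
open Metric MeasureTheory Finset

/-- Packing lemma: `d`-separated points in a closed ball of radius `r` are few. -/
lemma pack3 {M : ℕ} (z : Fin M → EuclideanSpace ℝ (Fin 3)) (d : ℝ) (hd : 0 < d)
    (hsep : ∀ i j : Fin M, i ≠ j → d ≤ dist (z i) (z j))
    (s : Finset (Fin M)) (c : EuclideanSpace ℝ (Fin 3)) (r : ℝ) (hr : 0 ≤ r)
    (hz : ∀ j ∈ s, z j ∈ Metric.closedBall c r) :
    (s.card : ℝ) * (d/2)^3 ≤ (r + d)^3 := by
  set V := volume (Metric.ball (0 : EuclideanSpace ℝ (Fin 3)) 1) with hV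
  have hVpos : 0 < V := measure_ball_pos _ _ one_pos
  have hVtop : V ≠ ⊤ := measure_ball_lt_top.ne
  have hdisj : (s : Set (Fin M)).PairwiseDisjoint (fun j => Metric.ball (z j) (d/2)) := by
    intro a _ b _ hab
    exact Metric.ball_disjoint_ball (by have := hsep a b hab; linarith)
  have hsub : (⋃ j ∈ s, Metric.ball (z j) (d/2)) ⊆ Metric.ball c (r + d) := by
    intro x hx
    simp only [Set.mem_iUnion] at hx
    obtain ⟨j, hj, hxj⟩ := hx
    have h1 := hz j hj
    rw [Metric.mem_closedBall] at h1
    rw [Metric.mem_ball] at hxj ⊢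
    calc dist x c ≤ dist x (z j) + dist (z j) c := dist_triangle _ _ _
      _ < d/2 + r := by linarith
      _ ≤ r + d := by linarith
  have hball : ∀ (x : EuclideanSpace ℝ (Fin 3)) (ρ : ℝ), 0 ≤ ρ →
      volume (Metric.ball x ρ) = ENNReal.ofReal (ρ^3) * V := by
    intro x ρ hρ
    rw [Measure.addHaar_ball volume x hρ, finrank_euclideanSpace_fin]
  have hmeas : volume (⋃ j ∈ s, Metric.ball (z j) (d/2))
      = (s.card : ENNReal) * (ENNReal.ofReal ((d/2)^3) * V) := by
    rw [measure_biUnion_finset hdisj (fun j _ => measurableSet_ball)]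
    rw [Finset.sum_congr rfl (fun j _ => hball (z j) (d/2) (by linarith))]
    rw [Finset.sum_const, nsmul_eq_mul]
  have hle : (s.card : ENNReal) * (ENNReal.ofReal ((d/2)^3) * V)
      ≤ ENNReal.ofReal ((r+d)^3) * V := by
    rw [← hmeas, ← hball c (r+d) (by linarith)]
    exact measure_mono hsub
  rw [← mul_assoc] at hle
  have hle2 : (s.card : ENNReal) * ENNReal.ofReal ((d/2)^3) ≤ ENNReal.ofReal ((r+d)^3) :=
    (ENNReal.mul_le_mul_iff_left hVpos.ne' hVtop).1 hle
  have : ENNReal.ofReal ((s.card : ℝ) * (d/2)^3) ≤ ENNReal.ofReal ((r+d)^3) := by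
    rwa [ENNReal.ofReal_mul (by positivity), ENNReal.ofReal_natCast]
  rwa [ENNReal.ofReal_le_ofReal_iff (by positivity)] at this

lemma keyid (d k : ℝ) (hd : 0 < d) (m : ℕ) :
    (8:ℝ)^m * ((2:ℝ)^m * d)^(-k) = d^(-k) * ((2:ℝ)^((3:ℝ)-k))^m := by
  rw [Real.mul_rpow (by positivity) hd.le]
  rw [← Real.rpow_natCast (2:ℝ) m, ← Real.rpow_natCast ((2:ℝ)^((3:ℝ)-k)) m,
      ← Real.rpow_natCast (8:ℝ) m]
  rw [show (8:ℝ) = (2:ℝ)^(3:ℝ) by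
        rw [show (3:ℝ) = ((3:ℕ):ℝ) by norm_num, Real.rpow_natCast]; norm_num]
  rw [← Real.rpow_mul (by norm_num), ← Real.rpow_mul (by norm_num),
      ← Real.rpow_mul (by norm_num)]
  rw [show ((3:ℝ)-k)*(m:ℝ) = 3*(m:ℝ) + (m:ℝ)*(-k) by ring,
      Real.rpow_add (by norm_num : (0:ℝ) < 2)]
  ring

/-- Master shell-decomposition bound. -/
lemma master (R d k : ℝ) (hR : 0 < R) (hd : 0 < d) (hk : 0 ≤ k) {M : ℕ}
    (z : Fin M → EuclideanSpace ℝ (Fin 3)) (c : EuclideanSpace ℝ (Fin 3))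
    (hball : ∀ i, z i ∈ Metric.closedBall c R)
    (hsep : ∀ i j, i ≠ j → d ≤ ‖z i - z j‖) (i : Fin M) :
    ∑ j ∈ Finset.univ.erase i, ‖z i - z j‖ ^ (-k)
      ≤ 512 * d ^ (-k) * ∑ m ∈ Finset.range (Nat.log 2 ⌊2*R/d⌋₊ + 1), ((2:ℝ) ^ ((3:ℝ)-k)) ^ m := by
  set L := Nat.log 2 ⌊2*R/d⌋₊ with hL
  have hsepd : ∀ a b : Fin M, a ≠ b → d ≤ dist (z a) (z b) := by
    intro a b hab; rw [dist_eq_norm]; exact hsep a b hab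
  set g : Fin M → ℕ := fun j => Nat.log 2 ⌊dist (z i) (z j) / d⌋₊ with hg
  have hfloor1 : ∀ j : Fin M, j ≠ i → 1 ≤ ⌊dist (z i) (z j) / d⌋₊ := by
    intro j hj
    apply Nat.le_floor
    rw [Nat.cast_one, le_div_iff₀ hd, one_mul]
    exact hsepd i j (Ne.symm hj)
  have hlow : ∀ j : Fin M, j ≠ i → (2:ℝ)^(g j) * d ≤ dist (z i) (z j) := by
    intro j hj
    have h1 : (2:ℕ)^(g j) ≤ ⌊dist (z i) (z j) / d⌋₊ :=
      Nat.pow_log_le_self 2 (by have := hfloor1 j hj; omega)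
    have h2 : ((2:ℝ))^(g j) ≤ (⌊dist (z i) (z j) / d⌋₊ : ℝ) := by
      exact_mod_cast h1
    have h3 : (⌊dist (z i) (z j) / d⌋₊ : ℝ) ≤ dist (z i) (z j) / d :=
      Nat.floor_le (by positivity)
    rw [← le_div_iff₀ hd]
    linarith
  have hup : ∀ j : Fin M, j ≠ i → dist (z i) (z j) < (2:ℝ)^(g j + 1) * d := by
    intro j hj
    have h1 : ⌊dist (z i) (z j) / d⌋₊ < 2^(g j + 1) :=
      Nat.lt_pow_succ_log_self (by norm_num) _
    have h2 : dist (z i) (z j) / d < (⌊dist (z i) (z j) / d⌋₊ : ℝ) + 1 :=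
      Nat.lt_floor_add_one _
    have h3 : ((⌊dist (z i) (z j) / d⌋₊ : ℝ) + 1) ≤ (2:ℝ)^(g j + 1) := by
      have : (⌊dist (z i) (z j) / d⌋₊ : ℕ) + 1 ≤ 2^(g j + 1) := h1
      exact_mod_cast this
    rw [← div_lt_iff₀ hd]
    linarith
  have hdiam : ∀ j : Fin M, dist (z i) (z j) ≤ 2*R := by
    intro j
    have h1 := hball i; have h2 := hball j
    rw [Metric.mem_closedBall] at h1 h2
    calc dist (z i) (z j) ≤ dist (z i) c + dist c (z j) := dist_triangle _ _ _
      _ ≤ R + R := by rw [dist_comm c (z j)]; linarith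
      _ = 2*R := by ring
  have hmaps : ∀ j ∈ Finset.univ.erase i, g j ∈ Finset.range (L + 1) := by
    intro j hj
    rw [Finset.mem_erase] at hj
    rw [Finset.mem_range, Nat.lt_succ_iff, hL]
    apply Nat.log_mono_right
    apply Nat.floor_le_floor
    gcongr
    exact hdiam j
  rw [← Finset.sum_fiberwise_of_maps_to hmaps (fun j => ‖z i - z j‖ ^ (-k)),
      Finset.mul_sum]
  apply Finset.sum_le_sum
  intro m _
  set F := (Finset.univ.erase i).filter (fun j => g j = m) with hF
  have hFsub : ∀ j ∈ F, j ≠ i ∧ g j = m := by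
    intro j hj
    rw [hF, Finset.mem_filter, Finset.mem_erase] at hj
    exact ⟨hj.1.1, hj.2⟩
  have hterm : ∀ j ∈ F, ‖z i - z j‖ ^ (-k) ≤ ((2:ℝ)^m * d) ^ (-k) := by
    intro j hj
    obtain ⟨hji, hgj⟩ := hFsub j hj
    have := hlow j hji
    rw [hgj] at this
    rw [← dist_eq_norm]
    exact Real.rpow_le_rpow_of_nonpos (by positivity) this (neg_nonpos.mpr hk)
  have hsum1 : ∑ j ∈ F, ‖z i - z j‖ ^ (-k) ≤ (F.card : ℝ) * ((2:ℝ)^m * d) ^ (-k) := by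
    have := Finset.sum_le_card_nsmul F (fun j => ‖z i - z j‖ ^ (-k)) _ hterm
    rwa [nsmul_eq_mul] at this
  have hcard : (F.card : ℝ) ≤ 512 * 8^m := by
    have hp := pack3 z d hd hsepd F (z i) ((2:ℝ)^(m+1) * d) (by positivity)
      (by
        intro j hj
        obtain ⟨hji, hgj⟩ := hFsub j hj
        have := hup j hji
        rw [hgj] at this
        rw [Metric.mem_closedBall, dist_comm]
        linarith)
    have hx1 : (1:ℝ) ≤ (2:ℝ)^m := one_le_pow₀ (by norm_num)
    have h1 : (2:ℝ)^(m+1) * d + d ≤ 4 * ((2:ℝ)^m) * d := by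
      rw [pow_succ]; nlinarith
    have h2 : ((2:ℝ)^(m+1) * d + d)^3 ≤ (4 * ((2:ℝ)^m) * d)^3 :=
      pow_le_pow_left₀ (by positivity) h1 3
    have h3 : (4 * ((2:ℝ)^m) * d)^3 = 512 * 8^m * (d/2)^3 := by
      rw [show (8:ℝ)^m = ((2:ℝ)^m)^3 from by
        rw [show (8:ℝ)=2^3 by norm_num, ← pow_mul, ← pow_mul, Nat.mul_comm]]
      ring
    have hd3 : (0:ℝ) < (d/2)^3 := by positivity
    have hfin : (F.card : ℝ) * (d/2)^3 ≤ 512*8^m*(d/2)^3 := by linarith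
    exact le_of_mul_le_mul_right hfin hd3
  calc ∑ j ∈ F, ‖z i - z j‖ ^ (-k) ≤ (F.card : ℝ) * ((2:ℝ)^m * d) ^ (-k) := hsum1
    _ ≤ 512 * 8^m * ((2:ℝ)^m * d) ^ (-k) := by
        apply mul_le_mul_of_nonneg_right hcard (by positivity)
    _ = 512 * (d ^ (-k) * ((2:ℝ)^((3:ℝ)-k))^m) := by rw [mul_assoc, keyid d k hd m]
    _ = 512 * d ^ (-k) * ((2:ℝ)^((3:ℝ)-k))^m := by ring

lemma two_pow_log_le (R d : ℝ) (hR : 0 < R) (hd : 0 < d) (hRd : 1 ≤ 2*R/d) :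
    (2:ℝ)^(Nat.log 2 ⌊2*R/d⌋₊) ≤ 2*R/d := by
  have h0 : 1 ≤ ⌊2*R/d⌋₊ := Nat.le_floor (by exact_mod_cast hRd)
  have h1 : 2^(Nat.log 2 ⌊2*R/d⌋₊) ≤ ⌊2*R/d⌋₊ := Nat.pow_log_le_self 2 (by omega)
  calc (2:ℝ)^(Nat.log 2 ⌊2*R/d⌋₊) = ((2^(Nat.log 2 ⌊2*R/d⌋₊) : ℕ) : ℝ) := by push_cast; ring
    _ ≤ (⌊2*R/d⌋₊ : ℝ) := by exact_mod_cast h1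
    _ ≤ 2*R/d := Nat.floor_le (by positivity)

lemma erase_empty_of_small {M : ℕ} (z : Fin M → EuclideanSpace ℝ (Fin 3))
    (c : EuclideanSpace ℝ (Fin 3)) (R d : ℝ)
    (hball : ∀ i, z i ∈ Metric.closedBall c R)
    (hsep : ∀ i j, i ≠ j → d ≤ ‖z i - z j‖) (i : Fin M)
    (hsmall : 2*R < d) : Finset.univ.erase i = ∅ := by
  rw [Finset.eq_empty_iff_forall_notMem]
  intro j hj
  rw [Finset.mem_erase] at hj
  have h1 := hsep i j (Ne.symm hj.1)
  have h2 : ‖z i - z j‖ ≤ 2*R := by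
    rw [← dist_eq_norm]
    have ha := hball i; have hb := hball j
    rw [Metric.mem_closedBall] at ha hb
    calc dist (z i) (z j) ≤ dist (z i) c + dist c (z j) := dist_triangle _ _ _
      _ ≤ R + R := by rw [dist_comm c (z j)]; linarith
      _ = 2*R := by ring
  linarith

/-- Counting Lemma: for every `R > 0` and `k > 0` there is `C > 0` such that for
every `0 < d ≤ 1`, every finite family of points `z_1, …, z_M` of ℝ³ contained in a
closed ball of radius `R` and with pairwise distances at least `d`, and every index
`i`, one has (uniformly in `i`):
`Σ_{j≠i} |z_i − z_j|^{−k} ≤ C d^{−3}` if `k < 3`;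
`Σ_{j≠i} |z_i − z_j|^{−k} ≤ C d^{−3}(1 + |log d|)` if `k = 3`;
`Σ_{j≠i} |z_i − z_j|^{−k} ≤ C d^{−k}` if `k > 3`. -/
theorem stmt17 (R : ℝ) (hR : 0 < R) (k : ℝ) (hk : 0 < k) :
    ∃ C > 0, ∀ (d : ℝ), 0 < d → d ≤ 1 →
      ∀ (M : ℕ) (z : Fin M → EuclideanSpace ℝ (Fin 3))
        (c : EuclideanSpace ℝ (Fin 3)),
        (∀ i, z i ∈ Metric.closedBall c R) →
        (∀ i j, i ≠ j → d ≤ ‖z i - z j‖) →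
        ∀ i : Fin M,
          (k < 3 →
            ∑ j ∈ Finset.univ.erase i, ‖z i - z j‖ ^ (-k) ≤ C * d ^ (-(3 : ℝ))) ∧
          (k = 3 →
            ∑ j ∈ Finset.univ.erase i, ‖z i - z j‖ ^ (-k)
              ≤ C * d ^ (-(3 : ℝ)) * (1 + |Real.log d|)) ∧
          (3 < k →
            ∑ j ∈ Finset.univ.erase i, ‖z i - z j‖ ^ (-k) ≤ C * d ^ (-k)) := by
  rcases lt_trichotomy k 3 with hlt | heq | hgt
  · -- case k < 3
    set t : ℝ := (2:ℝ)^((3:ℝ)-k) with ht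
    have ht0 : 0 < t := Real.rpow_pos_of_pos two_pos _
    have ht1 : 1 < t := by
      rw [ht, show (1:ℝ) = (2:ℝ)^(0:ℝ) by simp]
      exact Real.rpow_lt_rpow_of_exponent_lt one_lt_two (by linarith)
    have hC0 : 0 < 512 * t * (2*R)^((3:ℝ)-k) / (t-1) := by
      apply div_pos _ (by linarith)
      have : (0:ℝ) < (2*R)^((3:ℝ)-k) := Real.rpow_pos_of_pos (by linarith) _
      nlinarith
    refine ⟨512 * t * (2*R)^((3:ℝ)-k) / (t-1), hC0, ?_⟩
    intro d hd hd1 M z c hball hsep i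
    refine ⟨fun _ => ?_, fun h => absurd h (by intro h; rw [h] at hlt; linarith),
      fun h => absurd h (by intro h'; linarith)⟩
    by_cases hRd : 1 ≤ 2*R/d
    · have hM := master R d k hR hd hk.le z c hball hsep i
      set L := Nat.log 2 ⌊2*R/d⌋₊ with hL
      have h2L : (2:ℝ)^L ≤ 2*R/d := two_pow_log_le R d hR hd hRd
      have htL : t^L = ((2:ℝ)^L)^((3:ℝ)-k) := by
        rw [ht, ← Real.rpow_natCast ((2:ℝ)^((3:ℝ)-k)) L, ← Real.rpow_natCast (2:ℝ) L,
          ← Real.rpow_mul (by norm_num), ← Real.rpow_mul (by norm_num), mul_comm]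
      have htLle : t^L ≤ (2*R)^((3:ℝ)-k) * d^(-((3:ℝ)-k)) := by
        rw [htL]
        calc ((2:ℝ)^L)^((3:ℝ)-k) ≤ (2*R/d)^((3:ℝ)-k) :=
              Real.rpow_le_rpow (by positivity) h2L (by linarith)
          _ = (2*R)^((3:ℝ)-k) * d^(-((3:ℝ)-k)) := by
              rw [div_eq_mul_inv, Real.mul_rpow (by linarith) (by positivity),
                Real.inv_rpow hd.le, ← Real.rpow_neg hd.le]
      have hSle : ∑ m ∈ Finset.range (L+1), t^m
          ≤ t * ((2*R)^((3:ℝ)-k) * d^(-((3:ℝ)-k))) / (t-1) := by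
        rw [geom_sum_eq (ne_of_gt ht1) (L+1)]
        have hXnn : 0 ≤ t * ((2*R)^((3:ℝ)-k) * d^(-((3:ℝ)-k))) := by positivity
        have hnum : t^(L+1) - 1 ≤ t * ((2*R)^((3:ℝ)-k) * d^(-((3:ℝ)-k))) := by
          have hstep : t^(L+1) = t * t^L := by rw [pow_succ]; ring
          have hmul := mul_le_mul_of_nonneg_left htLle ht0.le
          have hpos : 0 ≤ t^(L+1) := by positivity
          linarith [hstep ▸ hmul]
        exact div_le_div₀ hXnn hnum (by linarith) le_rfl
      have step2 : ∑ j ∈ Finset.univ.erase i, ‖z i - z j‖ ^ (-k)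
          ≤ 512 * d^(-k) * (t * ((2*R)^((3:ℝ)-k) * d^(-((3:ℝ)-k))) / (t-1)) := by
        refine hM.trans ?_
        apply mul_le_mul_of_nonneg_left hSle (by positivity)
      have hdd : d^(-k) * d^(-((3:ℝ)-k)) = d^(-(3:ℝ)) := by
        rw [← Real.rpow_add hd]; ring_nf
      have heqn : 512 * d^(-k) * (t * ((2*R)^((3:ℝ)-k) * d^(-((3:ℝ)-k))) / (t-1))
          = 512 * t * (2*R)^((3:ℝ)-k) / (t-1) * (d^(-k) * d^(-((3:ℝ)-k))) := by
        field_simp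
      rw [heqn, hdd] at step2
      exact step2
    · push_neg at hRd
      rw [erase_empty_of_small z c R d hball hsep i (by
        rw [div_lt_one hd] at hRd; exact hRd), Finset.sum_empty]
      positivity
  · -- case k = 3
    subst heq
    set A : ℝ := 1 + |Real.log (2*R)|/Real.log 2 + 1/Real.log 2 with hA
    have hlog2 : 0 < Real.log 2 := Real.log_pos one_lt_two
    have hA0 : 0 < A := by
      have : 0 ≤ |Real.log (2*R)|/Real.log 2 := by positivity
      have : 0 < 1/Real.log 2 := by positivity
      rw [hA]; positivity
    clear_value A
    refine ⟨512 * A, by positivity, ?_⟩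
    intro d hd hd1 M z c hball hsep i
    refine ⟨fun h => absurd h (by norm_num), fun _ => ?_, fun h => absurd h (by norm_num)⟩
    by_cases hRd : 1 ≤ 2*R/d
    · have hM := master R d 3 hR hd (by norm_num) z c hball hsep i
      set L := Nat.log 2 ⌊2*R/d⌋₊ with hL
      have hS : ∑ m ∈ Finset.range (L+1), ((2:ℝ)^((3:ℝ)-3))^m = (L:ℝ) + 1 := by
        norm_num [Real.rpow_zero]
      rw [hS] at hM
      have h2L : (2:ℝ)^L ≤ 2*R/d := two_pow_log_le R d hR hd hRd
      have hlog : (L:ℝ) * Real.log 2 ≤ Real.log (2*R) - Real.log d := by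
        have h := (Real.log_le_log_iff (by positivity) (by positivity)).mpr h2L
        rw [Real.log_pow, Real.log_div (by linarith) (ne_of_gt hd)] at h
        exact h
      have habs : |Real.log d| = -Real.log d := abs_of_nonpos (Real.log_nonpos hd.le hd1)
      have hAd : (L:ℝ) + 1 ≤ A * (1 + |Real.log d|) := by
        have h1 : (L:ℝ) * Real.log 2 ≤ |Real.log (2*R)| + |Real.log d| := by
          have := le_abs_self (Real.log (2*R))
          rw [habs]; linarith
        have h2 : (L:ℝ) ≤ |Real.log (2*R)|/Real.log 2 + (1/Real.log 2) * |Real.log d| := by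
          rw [← sub_nonneg]
          have key : (|Real.log (2*R)|/Real.log 2 + (1/Real.log 2) * |Real.log d| - (L:ℝ))
              * Real.log 2 = |Real.log (2*R)| + |Real.log d| - (L:ℝ) * Real.log 2 := by
            field_simp
          nlinarith [h1]
        have h3 : (1/Real.log 2) * |Real.log d| ≤ A * |Real.log d| := by
          apply mul_le_mul_of_nonneg_right _ (abs_nonneg _)
          rw [hA]
          have : 0 ≤ |Real.log (2*R)|/Real.log 2 := by positivity
          linarith
        have h4 : |Real.log (2*R)|/Real.log 2 = A - 1 - 1/Real.log 2 := by rw [hA]; ring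
        have h5 : A * (1 + |Real.log d|) = A + A * |Real.log d| := by ring
        have h7 : 0 < 1/Real.log 2 := by positivity
        linarith
      calc ∑ j ∈ Finset.univ.erase i, ‖z i - z j‖ ^ (-(3:ℝ))
          ≤ 512 * d^(-(3:ℝ)) * ((L:ℝ) + 1) := hM
        _ ≤ 512 * d^(-(3:ℝ)) * (A * (1 + |Real.log d|)) := by
            apply mul_le_mul_of_nonneg_left hAd (by positivity)
        _ = 512 * A * d^(-(3:ℝ)) * (1 + |Real.log d|) := by ring
    · push_neg at hRd
      rw [erase_empty_of_small z c R d hball hsep i (by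
        rw [div_lt_one hd] at hRd; exact hRd), Finset.sum_empty]
      have h6 : 0 < 1 + |Real.log d| := by positivity
      have hd3 : 0 < d^(-(3:ℝ)) := Real.rpow_pos_of_pos hd _
      exact le_of_lt (mul_pos (mul_pos (mul_pos (by norm_num) hA0) hd3) h6)
  · -- case 3 < k
    set t : ℝ := (2:ℝ)^((3:ℝ)-k) with ht
    have ht0 : 0 < t := Real.rpow_pos_of_pos two_pos _
    have ht1 : t < 1 := Real.rpow_lt_one_of_one_lt_of_neg one_lt_two (by linarith)
    have hCpos : (0:ℝ) < 512 / (1-t) := by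
      have h1t : 0 < 1 - t := by linarith
      positivity
    refine ⟨512 / (1-t), hCpos, ?_⟩
    intro d hd hd1 M z c hball hsep i
    refine ⟨fun h => absurd h (by intro h'; linarith),
      fun h => absurd h (by intro h'; rw [h'] at hgt; linarith), fun _ => ?_⟩
    have hM := master R d k hR hd hk.le z c hball hsep i
    set L := Nat.log 2 ⌊2*R/d⌋₊ with hL
    have hSle : ∑ m ∈ Finset.range (L+1), t^m ≤ 1/(1-t) := by
      rw [geom_sum_eq (ne_of_lt ht1) (L+1)]
      rw [show (t^(L+1) - 1)/(t-1) = (1 - t^(L+1))/(1-t) by rw [← neg_div_neg_eq]; ring_nf]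
      apply div_le_div₀ zero_le_one _ (by linarith) le_rfl
      nlinarith [pow_nonneg ht0.le (L+1)]
    calc ∑ j ∈ Finset.univ.erase i, ‖z i - z j‖ ^ (-k)
        ≤ 512 * d^(-k) * ∑ m ∈ Finset.range (L+1), t^m := hM
      _ ≤ 512 * d^(-k) * (1/(1-t)) := by
          apply mul_le_mul_of_nonneg_left hSle (by positivity)
      _ = 512/(1-t) * d^(-k) := by ring
end
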